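/- arXiv:2301.02436 — 12 statements merged into one kernel-verified Lean document; each statement's English description precedes it below -/
import Mathlib

section
/- Let G be a k-vertex-critical graph. Then there do not exist two nonempty disjoint vertex subsets X and Y such that: X and Y are anticomplete to each other (no edges between them), χ(G[X]) ≤ χ(G[Y]), and Y is complete to N(X) (every vertex of Y is adjacent to every vertex of N(X)∖(X∪Y)). -/
open SimpleGraph

/-- The chair: a `P₄` (0-1-2-3) with an extra vertex 4 adjacent to the middle vertex 2. -/
def chair : SimpleGraph (Fin 5) :=
  SimpleGraph.fromRel (fun a b => (a, b) ∈ [((0 : Fin 5), (1 : Fin 5)), (1, 2), (2, 3), (2, 4)])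

/-- The cycle on five vertices. -/
def cycle5 : SimpleGraph (Fin 5) :=
  SimpleGraph.fromRel (fun a b => b = a + 1)

/-- `G` contains an induced copy of `H`. -/
def HasInducedCopy {α V : Type*} (H : SimpleGraph α) (G : SimpleGraph V) : Prop :=
  ∃ f : α → V, Function.Injective f ∧ ∀ a b, G.Adj (f a) (f b) ↔ H.Adj a b

/-- `G` is `k`-vertex-critical. -/
def IsVertexCritical {V : Type*} (G : SimpleGraph V) (k : ℕ) : Prop :=
  G.chromaticNumber = k ∧ ∀ x : V, (G.induce {x}ᶜ).chromaticNumber < k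

/-- `v : Fin 5 → V` is an induced five-cycle in `G`. -/
def IsInducedC5 {V : Type*} (G : SimpleGraph V) (v : Fin 5 → V) : Prop :=
  Function.Injective v ∧ ∀ i j, G.Adj (v i) (v j) ↔ cycle5.Adj i j

/-- Vertices outside `C` whose neighbourhood on `C` is `{v (i-1), v i, v (i+1)}`. -/
def S13 {V : Type*} (G : SimpleGraph V) (v : Fin 5 → V) (i : Fin 5) : Set V :=
  {x | x ∉ Set.range v ∧ ∀ j, G.Adj x (v j) ↔ (j = i - 1 ∨ j = i ∨ j = i + 1)}

/-- Vertices outside `C` whose neighbourhood on `C` is `{v (i-2), v i, v (i+2)}`. -/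
def S23 {V : Type*} (G : SimpleGraph V) (v : Fin 5 → V) (i : Fin 5) : Set V :=
  {x | x ∉ Set.range v ∧ ∀ j, G.Adj x (v j) ↔ (j = i - 2 ∨ j = i ∨ j = i + 2)}

/-- Vertices outside `C` whose neighbourhood on `C` is all of `C` except `v i`. -/
def S4 {V : Type*} (G : SimpleGraph V) (v : Fin 5 → V) (i : Fin 5) : Set V :=
  {x | x ∉ Set.range v ∧ ∀ j, G.Adj x (v j) ↔ j ≠ i}

/-- Vertices outside `C` adjacent to all of `C`. -/
def S5 {V : Type*} (G : SimpleGraph V) (v : Fin 5 → V) : Set V :=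
  {x | x ∉ Set.range v ∧ ∀ j, G.Adj x (v j)}

theorem stmt1 {V : Type*} [Fintype V] (G : SimpleGraph V) (k : ℕ)
    (hG : IsVertexCritical G k) :
    ¬ ∃ X Y : Set V, X.Nonempty ∧ Y.Nonempty ∧ Disjoint X Y ∧
      (∀ x ∈ X, ∀ y ∈ Y, ¬ G.Adj x y) ∧
      (G.induce X).chromaticNumber ≤ (G.induce Y).chromaticNumber ∧
      (∀ y ∈ Y, ∀ w : V, w ∉ X → w ∉ Y → (∃ x ∈ X, G.Adj w x) → G.Adj y w) := by
  classical
  rintro ⟨X, Y, ⟨x0, hx0⟩, hYne, hdisj, hanti, hchi, hdom⟩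
  -- coloring of G - x0 with m < k colors
  have hlt := hG.2 x0
  have hfin : (G.induce {x0}ᶜ).chromaticNumber ≠ ⊤ := hlt.ne_top
  obtain ⟨m, hm⟩ := WithTop.ne_top_iff_exists.mp hfin
  have hmk : m < k := by
    rw [← hm] at hlt; exact WithTop.coe_lt_coe.mp hlt
  have hcol0 : (G.induce {x0}ᶜ).Colorable m := by
    rw [← chromaticNumber_le_iff_colorable]; exact hm.ge
  obtain ⟨c0⟩ := hcol0
  -- coloring of G - X
  have hXc : ∀ v : V, v ∉ X → v ∈ ({x0}ᶜ : Set V) := fun v hv => by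
    simp only [Set.mem_compl_iff, Set.mem_singleton_iff]
    rintro rfl; exact hv hx0
  let c : (G.induce (Xᶜ : Set V)).Coloring (Fin m) :=
    Coloring.mk (fun v => c0 ⟨v.1, hXc v.1 v.2⟩) (by
      rintro ⟨u, hu⟩ ⟨v, hv⟩ huv
      exact c0.valid huv)
  -- colors used on Y
  let e : Y → (Xᶜ : Set V) := fun y => ⟨y.1, fun h => (hdisj.le_bot ⟨h, y.2⟩ : _)⟩
  let S : Set (Fin m) := Set.range (fun y => c (e y))
  have hSfin : Fintype S := Fintype.ofFinite _
  -- G[Y] is colorable with colors from S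
  let cY : (G.induce Y).Coloring S :=
    Coloring.mk (fun y => ⟨c (e y), Set.mem_range_self y⟩) (by
      rintro ⟨u, hu⟩ ⟨v, hv⟩ huv h
      exact c.valid (by exact huv : (G.induce (Xᶜ : Set V)).Adj (e ⟨u, hu⟩) (e ⟨v, hv⟩))
        (Subtype.ext_iff.mp h))
  have hYle : (G.induce Y).chromaticNumber ≤ Fintype.card S := cY.colorable.chromaticNumber_le
  have hXcol : (G.induce X).Colorable (Fintype.card S) := by
    rw [← chromaticNumber_le_iff_colorable]
    exact hchi.trans hYle
  let d : (G.induce X).Coloring S := hXcol.toColoring le_rfl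
  -- combined coloring
  let f : V → Fin m := fun v => if h : v ∈ X then (d ⟨v, h⟩ : Fin m) else c ⟨v, h⟩
  have hf : ∀ u v : V, G.Adj u v → f u ≠ f v := by
    have key : ∀ (u v : V), G.Adj u v → ∀ (hu : u ∈ X) (hv : v ∉ X),
        (d ⟨u, hu⟩ : Fin m) ≠ c ⟨v, hv⟩ := by
      intro u v huv hu hv
      have hvY : v ∉ Y := fun hvY => hanti u hu v hvY huv
      obtain ⟨y, hy⟩ := (d ⟨u, hu⟩).2
      have hadj : G.Adj y.1 v := hdom y.1 y.2 v hv hvY ⟨u, hu, huv.symm⟩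
      intro hEq
      exact c.valid (by exact hadj : (G.induce (Xᶜ : Set V)).Adj (e y) ⟨v, hv⟩)
        (hy.trans hEq)
    intro u v huv
    simp only [f]
    by_cases hu : u ∈ X <;> by_cases hv : v ∈ X <;> simp [hu, hv]
    · intro h
      exact d.valid (by exact huv : (G.induce X).Adj ⟨u, hu⟩ ⟨v, hv⟩) (Subtype.ext h)
    · exact key u v huv hu hv
    · exact fun h => key v u huv.symm hv hu h.symm
    · exact c.valid (by exact huv : (G.induce (Xᶜ : Set V)).Adj ⟨u, hu⟩ ⟨v, hv⟩)
  have : G.Colorable m := ⟨Coloring.mk f (fun h => hf _ _ h)⟩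
  have : G.chromaticNumber ≤ m := this.chromaticNumber_le
  rw [hG.1] at this
  exact absurd (by exact_mod_cast this : k ≤ m) (not_le.mpr hmk)
end

section
/- Let G be a connected (P5, chair)-free graph containing an induced 5-cycle C, and suppose G is 5-vertex-critical. Then the set S0 of vertices of G outside C with no neighbor on C is empty, i.e. every vertex of G outside C has at least one neighbor on C. -/
open SimpleGraph

/-! ### Auxiliary material -/

instance : DecidableRel cycle5.Adj := fun a b =>
  inferInstanceAs (Decidable (a ≠ b ∧ (b = a + 1 ∨ a = b + 1)))

instance : DecidableRel chair.Adj := fun a b =>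
  inferInstanceAs (Decidable (a ≠ b ∧ (_ ∨ _)))

instance : DecidableRel (SimpleGraph.pathGraph 5).Adj := fun _ _ =>
  decidable_of_iff _ pathGraph_adj.symm

/-- If the ten adjacency/non-adjacency facts of an (induced) `P₅` hold, we get an induced copy. -/
lemma findP5 {V : Type*} {G : SimpleGraph V} (hP5 : ¬ HasInducedCopy (SimpleGraph.pathGraph 5) G)
    (p0 p1 p2 p3 p4 : V)
    (e01 : G.Adj p0 p1) (e12 : G.Adj p1 p2) (e23 : G.Adj p2 p3) (e34 : G.Adj p3 p4)
    (n02 : ¬ G.Adj p0 p2) (n03 : ¬ G.Adj p0 p3) (n04 : ¬ G.Adj p0 p4)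
    (n13 : ¬ G.Adj p1 p3) (n14 : ¬ G.Adj p1 p4) (n24 : ¬ G.Adj p2 p4) : False := by
  have d01 : p0 ≠ p1 := e01.ne
  have d12 : p1 ≠ p2 := e12.ne
  have d23 : p2 ≠ p3 := e23.ne
  have d34 : p3 ≠ p4 := e34.ne
  have d02 : p0 ≠ p2 := fun h => n03 (by rw [h]; exact e23)
  have d03 : p0 ≠ p3 := fun h => n04 (by rw [h]; exact e34)
  have d04 : p0 ≠ p4 := fun h => n03 (by rw [h]; exact e34.symm)
  have d13 : p1 ≠ p3 := fun h => n14 (by rw [h]; exact e34)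
  have d14 : p1 ≠ p4 := fun h => n24 (by rw [← h]; exact e12.symm)
  have d24 : p2 ≠ p4 := fun h => n14 (by rw [← h]; exact e12)
  apply hP5
  refine ⟨![p0, p1, p2, p3, p4], ?_, ?_⟩
  · intro a b hab
    fin_cases a <;> fin_cases b <;> simp_all
  · intro a b
    fin_cases a <;> fin_cases b
    · exact iff_of_false (G.loopless.irrefl _) (by decide)
    · exact iff_of_true e01 (by decide)
    · exact iff_of_false n02 (by decide)
    · exact iff_of_false n03 (by decide)
    · exact iff_of_false n04 (by decide)
    · exact iff_of_true e01.symm (by decide)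
    · exact iff_of_false (G.loopless.irrefl _) (by decide)
    · exact iff_of_true e12 (by decide)
    · exact iff_of_false n13 (by decide)
    · exact iff_of_false n14 (by decide)
    · exact iff_of_false (fun h => n02 h.symm) (by decide)
    · exact iff_of_true e12.symm (by decide)
    · exact iff_of_false (G.loopless.irrefl _) (by decide)
    · exact iff_of_true e23 (by decide)
    · exact iff_of_false n24 (by decide)
    · exact iff_of_false (fun h => n03 h.symm) (by decide)
    · exact iff_of_false (fun h => n13 h.symm) (by decide)
    · exact iff_of_true e23.symm (by decide)
    · exact iff_of_false (G.loopless.irrefl _) (by decide)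
    · exact iff_of_true e34 (by decide)
    · exact iff_of_false (fun h => n04 h.symm) (by decide)
    · exact iff_of_false (fun h => n14 h.symm) (by decide)
    · exact iff_of_false (fun h => n24 h.symm) (by decide)
    · exact iff_of_true e34.symm (by decide)
    · exact iff_of_false (G.loopless.irrefl _) (by decide)

/-- If the adjacency/non-adjacency facts of an (induced) chair hold, we get an induced copy. -/
lemma findChair {V : Type*} {G : SimpleGraph V} (hchair : ¬ HasInducedCopy chair G)
    (p0 p1 p2 p3 p4 : V)
    (e01 : G.Adj p0 p1) (e12 : G.Adj p1 p2) (e23 : G.Adj p2 p3) (e24 : G.Adj p2 p4)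
    (n02 : ¬ G.Adj p0 p2) (n03 : ¬ G.Adj p0 p3) (n04 : ¬ G.Adj p0 p4)
    (n13 : ¬ G.Adj p1 p3) (n14 : ¬ G.Adj p1 p4) (n34 : ¬ G.Adj p3 p4)
    (d34 : p3 ≠ p4) : False := by
  have d01 : p0 ≠ p1 := e01.ne
  have d12 : p1 ≠ p2 := e12.ne
  have d23 : p2 ≠ p3 := e23.ne
  have d24 : p2 ≠ p4 := e24.ne
  have d02 : p0 ≠ p2 := fun h => n03 (by rw [h]; exact e23)
  have d03 : p0 ≠ p3 := fun h => n02 (by rw [h]; exact e23.symm)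
  have d04 : p0 ≠ p4 := fun h => n02 (by rw [h]; exact e24.symm)
  have d13 : p1 ≠ p3 := fun h => n03 (by rw [← h]; exact e01)
  have d14 : p1 ≠ p4 := fun h => n04 (by rw [← h]; exact e01)
  apply hchair
  refine ⟨![p0, p1, p2, p3, p4], ?_, ?_⟩
  · intro a b hab
    fin_cases a <;> fin_cases b <;> simp_all
  · intro a b
    fin_cases a <;> fin_cases b
    · exact iff_of_false (G.loopless.irrefl _) (by decide)
    · exact iff_of_true e01 (by decide)
    · exact iff_of_false n02 (by decide)
    · exact iff_of_false n03 (by decide)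
    · exact iff_of_false n04 (by decide)
    · exact iff_of_true e01.symm (by decide)
    · exact iff_of_false (G.loopless.irrefl _) (by decide)
    · exact iff_of_true e12 (by decide)
    · exact iff_of_false n13 (by decide)
    · exact iff_of_false n14 (by decide)
    · exact iff_of_false (fun h => n02 h.symm) (by decide)
    · exact iff_of_true e12.symm (by decide)
    · exact iff_of_false (G.loopless.irrefl _) (by decide)
    · exact iff_of_true e23 (by decide)
    · exact iff_of_true e24 (by decide)
    · exact iff_of_false (fun h => n03 h.symm) (by decide)
    · exact iff_of_false (fun h => n13 h.symm) (by decide)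
    · exact iff_of_true e23.symm (by decide)
    · exact iff_of_false (G.loopless.irrefl _) (by decide)
    · exact iff_of_false n34 (by decide)
    · exact iff_of_false (fun h => n04 h.symm) (by decide)
    · exact iff_of_false (fun h => n14 h.symm) (by decide)
    · exact iff_of_true e24.symm (by decide)
    · exact iff_of_false (fun h => n34 h.symm) (by decide)
    · exact iff_of_false (G.loopless.irrefl _) (by decide)

set_option maxRecDepth 8000 in
/-- Coverage of the case analysis on the neighbourhood of `z` on the five-cycle. -/
lemma coverRules : ∀ N : Fin 5 → Bool, (∃ i, N i) → (∃ j, ¬ N j) →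
    (∃ i, N (i+0) ∧ ¬N (i+1) ∧ ¬N (i+4)) ∨ (∃ i, N (i+0) ∧ ¬N (i+1) ∧ ¬N (i+2)) ∨
    (∃ i, N (i+0) ∧ ¬N (i+4) ∧ ¬N (i+3)) ∨ (∃ i, ¬N (i+0) ∧ N (i+4) ∧ N (i+2)) := by
  decide

set_option maxRecDepth 8000 in
lemma cycShift : ∀ (i a b : Fin 5), cycle5.Adj (i+a) (i+b) ↔ cycle5.Adj a b := by decide

lemma finChoice : ∀ a b u y y' : Fin 4, a ≠ b → u ≠ a → u ≠ b → y ≠ a → y ≠ b →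
    y' ≠ a → y' ≠ b → y ≠ u → y' ≠ u → y = y' := by decide

lemma gsel : ∀ t : Fin 4, ∃ g : Fin 4 → Fin 3,
    ∀ y y', y ≠ t → y' ≠ t → y ≠ y' → g y ≠ g y' := by decide

lemma isel : ∀ t : Fin 4, ∃ g : Fin 3 → Fin 4, Function.Injective g ∧ ∀ k, g k ≠ t := by decide

theorem stmt5 {V : Type*} [Fintype V] (G : SimpleGraph V)
    (hconn : G.Connected)
    (hP5 : ¬ HasInducedCopy (SimpleGraph.pathGraph 5) G)
    (hchair : ¬ HasInducedCopy chair G)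
    (hcrit : IsVertexCritical G 5)
    (v : Fin 5 → V) (hC : IsInducedC5 G v) :
    ∀ x : V, x ∉ Set.range v → ∃ j, G.Adj x (v j) := by
  classical
  intro x hx1
  by_contra hx2'
  push_neg at hx2'
  -- basic facts about the cycle
  have hvadj : ∀ (i a b : Fin 5), cycle5.Adj a b → G.Adj (v (i+a)) (v (i+b)) :=
    fun i a b h => (hC.2 _ _).mpr ((cycShift i a b).mpr h)
  have hvnadj : ∀ (i a b : Fin 5), ¬ cycle5.Adj a b → ¬ G.Adj (v (i+a)) (v (i+b)) :=
    fun i a b h hA => h ((cycShift i a b).mp ((hC.2 _ _).mp hA))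
  have hvne : ∀ (i a b : Fin 5), a ≠ b → v (i+a) ≠ v (i+b) :=
    fun i a b hab h => hab (add_left_cancel (hC.1 h))
  -- the set of vertices with no neighbour on the cycle
  set S0 : Set V := {y | y ∉ Set.range v ∧ ∀ j, ¬ G.Adj y (v j)} with hS0def
  have hxS0 : x ∈ S0 := ⟨hx1, hx2'⟩
  -- any vertex outside S0 adjacent to a vertex of S0 is complete to the cycle
  have complete : ∀ w y, y ∈ S0 → G.Adj y w → (∃ i, G.Adj w (v i)) → ∀ j, G.Adj w (v j) := by
    intro w y hy hyw hex j
    by_contra hj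
    obtain ⟨i0, hi0⟩ := hex
    rcases coverRules (fun k => decide (G.Adj w (v k))) ⟨i0, decide_eq_true hi0⟩
        ⟨j, fun h => hj (of_decide_eq_true h)⟩ with
      ⟨i, h0, h1, h4⟩ | ⟨i, h0, h1, h2⟩ | ⟨i, h0, h4, h3⟩ | ⟨i, h0, h4, h2⟩
    · exact findChair hchair y w (v (i+0)) (v (i+4)) (v (i+1))
        hyw (of_decide_eq_true h0) (hvadj i 0 4 (by decide)) (hvadj i 0 1 (by decide))
        (hy.2 _) (hy.2 _) (hy.2 _)
        (fun h => h4 (decide_eq_true h)) (fun h => h1 (decide_eq_true h))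
        (hvnadj i 4 1 (by decide)) (hvne i 4 1 (by decide))
    · exact findP5 hP5 y w (v (i+0)) (v (i+1)) (v (i+2))
        hyw (of_decide_eq_true h0) (hvadj i 0 1 (by decide)) (hvadj i 1 2 (by decide))
        (hy.2 _) (hy.2 _) (hy.2 _)
        (fun h => h1 (decide_eq_true h)) (fun h => h2 (decide_eq_true h))
        (hvnadj i 0 2 (by decide))
    · exact findP5 hP5 y w (v (i+0)) (v (i+4)) (v (i+3))
        hyw (of_decide_eq_true h0) (hvadj i 0 4 (by decide)) (hvadj i 4 3 (by decide))
        (hy.2 _) (hy.2 _) (hy.2 _)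
        (fun h => h4 (decide_eq_true h)) (fun h => h3 (decide_eq_true h))
        (hvnadj i 0 3 (by decide))
    · exact findChair hchair (v (i+0)) (v (i+4)) w y (v (i+2))
        (hvadj i 0 4 (by decide)) (of_decide_eq_true h4).symm hyw.symm (of_decide_eq_true h2)
        (fun h => h0 (decide_eq_true h.symm)) (fun h => hy.2 (i+0) h.symm)
        (hvnadj i 0 2 (by decide)) (fun h => hy.2 (i+4) h.symm)
        (hvnadj i 4 2 (by decide)) (hy.2 _)
        (fun h => hy.1 ⟨i+2, h.symm⟩)
  -- the connected component of x inside S0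
  set r : V → V → Prop := fun u w => u ∈ S0 ∧ w ∈ S0 ∧ G.Adj u w with hrdef
  have hrsymm : Symmetric r := fun u w ⟨h1, h2, h3⟩ => ⟨h2, h1, h3.symm⟩
  set A : Set V := {u | Relation.ReflTransGen r x u} with hAdef
  have hxA : x ∈ A := Relation.ReflTransGen.refl
  have hAS0 : ∀ u, u ∈ A → u ∈ S0 := by
    intro u hu
    induction hu with
    | refl => exact hxS0
    | tail _ h _ => exact h.2.1
  have hAclosed : ∀ u w, u ∈ A → w ∈ S0 → G.Adj u w → w ∈ A :=
    fun u w hu hw h => Relation.ReflTransGen.tail hu ⟨hAS0 u hu, hw, h⟩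
  -- boundary pair
  have hv0 : v 0 ∉ S0 := fun h => h.1 ⟨0, rfl⟩
  have hbound : ∃ a z, a ∈ A ∧ z ∉ S0 ∧ G.Adj a z := by
    obtain ⟨w⟩ := hconn.preconnected x (v 0)
    have H : ∀ (y c : V), G.Walk y c → y ∈ A → c ∉ S0 → ∃ a z, a ∈ A ∧ z ∉ S0 ∧ G.Adj a z := by
      intro y c w
      induction w with
      | nil => exact fun hy hc => absurd (hAS0 _ hy) hc
      | @cons y b c h p ih =>
        intro hy hc
        by_cases hb : b ∈ S0
        · exact ih (hAclosed _ _ hy hb h) hc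
        · exact ⟨y, b, hy, hb, h⟩
    exact H x (v 0) w hxA hv0
  obtain ⟨a0, z, ha0, hznS0, hadj0⟩ := hbound
  -- z is complete to the cycle
  have hzv : z ∉ Set.range v := by
    rintro ⟨j, hj⟩
    exact (hAS0 a0 ha0).2 j (hj ▸ hadj0)
  have hzex : ∃ i, G.Adj z (v i) := by
    by_contra hno
    push_neg at hno
    exact hznS0 ⟨hzv, hno⟩
  have hzall : ∀ j, G.Adj z (v j) := complete z a0 (hAS0 _ ha0) hadj0 hzex
  -- z is complete to A
  have hzA : ∀ u, u ∈ A → G.Adj z u := by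
    have key : ∀ u u', r u u' → G.Adj z u → G.Adj z u' := by
      intro u u' ⟨hu, hu', huu'⟩ hzu
      by_contra hzu'
      exact findChair hchair u' u z (v 0) (v 2)
        huu'.symm hzu.symm (hzall 0) (hzall 2)
        (fun h => hzu' h.symm) (hu'.2 0) (hu'.2 2) (hu.2 0) (hu.2 2)
        ((hC.2 0 2).not.mpr (by decide) : ¬ G.Adj (v 0) (v 2))
        (fun h => absurd (hC.1 h) (by decide))
    intro u hu
    have h1 : Relation.ReflTransGen r a0 u :=
      ((@Relation.ReflTransGen.stdSymm _ r ⟨fun _ _ h => hrsymm h⟩).symm _ _ ha0).trans hu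
    clear hu
    induction h1 with
    | refl => exact hadj0.symm
    | tail _ h ih => exact key _ _ h ih
  -- colouring machinery
  have hcol : ∀ w : V, (G.induce {w}ᶜ).Colorable 4 := by
    intro w
    rw [← chromaticNumber_le_iff_colorable]
    exact (ENat.lt_add_one_iff (by decide)).mp (by have h := hcrit.2 w; norm_num at h ⊢; exact h)
  have hG4 : ¬ G.Colorable 4 := by
    intro hc
    have h := hc.chromaticNumber_le
    rw [hcrit.1] at h
    norm_num at h
  have hAne : ∀ {u : V}, u ∉ A → u ∈ ({x}ᶜ : Set V) := by
    intro u h he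
    rw [Set.mem_singleton_iff] at he
    subst he
    exact h hxA
  have hAcne : ∀ {u : V}, u ∈ A → u ∈ ({v 0}ᶜ : Set V) := by
    intro u h he
    rw [Set.mem_singleton_iff] at he
    exact (hAS0 u h).1 ⟨0, he.symm⟩
  have hzne0 : z ∈ ({v 0}ᶜ : Set V) := by
    intro he
    rw [Set.mem_singleton_iff] at he
    exact hzv ⟨0, he.symm⟩
  have hznex : z ∈ ({x}ᶜ : Set V) := by
    intro he
    rw [Set.mem_singleton_iff] at he
    subst he
    exact hznS0 hxS0
  have hvnex : ∀ i, v i ∈ ({x}ᶜ : Set V) := by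
    intro i he
    rw [Set.mem_singleton_iff] at he
    exact hx1 ⟨i, he⟩
  -- coloring of G - v 0, giving a 3-colouring of A
  obtain ⟨d4⟩ := hcol (v 0)
  obtain ⟨g, hg⟩ := gsel (d4 ⟨z, hzne0⟩)
  have hcA : ∀ u u' (hu : u ∈ A) (hu' : u' ∈ A), G.Adj u u' →
      g (d4 ⟨u, hAcne hu⟩) ≠ g (d4 ⟨u', hAcne hu'⟩) := by
    intro u u' hu hu' hadj
    exact hg _ _ (d4.valid (by exact hzA u hu)).symm
      (d4.valid (by exact hzA u' hu')).symm (d4.valid (by exact hadj))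
  -- coloring of G - x
  obtain ⟨d⟩ := hcol x
  obtain ⟨ι, hιinj, hιne⟩ := isel (d ⟨z, hznex⟩)
  have cAdj : ∀ i j, cycle5.Adj i j → d ⟨v i, hvnex i⟩ ≠ d ⟨v j, hvnex j⟩ :=
    fun i j h => d.valid (by exact (hC.2 i j).mpr h)
  have ht1 : ∀ i, d ⟨z, hznex⟩ ≠ d ⟨v i, hvnex i⟩ := fun i => d.valid (by exact hzall i)
  have hwt : ∀ w u (hwx : w ∈ ({x}ᶜ : Set V)), u ∈ A → G.Adj u w → w ∉ A →
      d ⟨w, hwx⟩ = d ⟨z, hznex⟩ := by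
    intro w u hwx hu huw hwA
    have hwS0 : w ∉ S0 := fun hw => hwA (hAclosed u w hu hw huw)
    have hwv : w ∉ Set.range v := by
      rintro ⟨j, hj⟩
      exact (hAS0 u hu).2 j (hj ▸ huw)
    have hwex : ∃ i, G.Adj w (v i) := by
      by_contra hno
      push_neg at hno
      exact hwS0 ⟨hwv, hno⟩
    have hwall := complete w u (hAS0 u hu) huw hwex
    have hdw : ∀ i, d ⟨w, hwx⟩ ≠ d ⟨v i, hvnex i⟩ := fun i => d.valid (by exact hwall i)
    by_contra hne
    have e02 : d ⟨v 0, hvnex 0⟩ = d ⟨v 2, hvnex 2⟩ :=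
      finChoice (d ⟨w, hwx⟩) (d ⟨z, hznex⟩) (d ⟨v 1, hvnex 1⟩) (d ⟨v 0, hvnex 0⟩)
        (d ⟨v 2, hvnex 2⟩) hne
        (fun h => hdw 1 h.symm) (fun h => ht1 1 h.symm)
        (fun h => hdw 0 h.symm) (fun h => ht1 0 h.symm)
        (fun h => hdw 2 h.symm) (fun h => ht1 2 h.symm)
        (cAdj 0 1 (by decide)) ((cAdj 1 2 (by decide)).symm)
    have e24 : d ⟨v 2, hvnex 2⟩ = d ⟨v 4, hvnex 4⟩ :=
      finChoice (d ⟨w, hwx⟩) (d ⟨z, hznex⟩) (d ⟨v 3, hvnex 3⟩) (d ⟨v 2, hvnex 2⟩)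
        (d ⟨v 4, hvnex 4⟩) hne
        (fun h => hdw 3 h.symm) (fun h => ht1 3 h.symm)
        (fun h => hdw 2 h.symm) (fun h => ht1 2 h.symm)
        (fun h => hdw 4 h.symm) (fun h => ht1 4 h.symm)
        (cAdj 2 3 (by decide)) ((cAdj 3 4 (by decide)).symm)
    exact cAdj 4 0 (by decide) (by rw [← e24, ← e02])
  -- assemble a 4-colouring of G
  apply hG4
  refine ⟨SimpleGraph.Coloring.mk
    (fun u => if h : u ∈ A then ι (g (d4 ⟨u, hAcne h⟩)) else d ⟨u, hAne h⟩) ?_⟩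
  intro a b hab
  by_cases ha : a ∈ A <;> by_cases hb : b ∈ A
  · rw [dif_pos ha, dif_pos hb]
    exact fun h => hcA a b ha hb hab (hιinj h)
  · rw [dif_pos ha, dif_neg hb, hwt b a (hAne hb) ha hab hb]
    exact hιne _
  · rw [dif_neg ha, dif_pos hb, hwt a b (hAne ha) hb hab.symm ha]
    exact fun h => hιne _ h.symm
  · rw [dif_neg ha, dif_neg hb]
    exact d.valid (by exact hab)
end

section
/- Let G be a connected (P5, chair)-free graph containing an induced 5-cycle C = v1...v5, and let u be a vertex outside C with no neighbor on C. Then every neighbor v of u that has a neighbor on C must be adjacent to all five vertices of C. -/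
open SimpleGraph

instance inst_s6 : DecidableRel cycle5.Adj := fun a b =>
  decidable_of_iff' _ (SimpleGraph.fromRel_adj _ a b)

lemma p5copy {V : Type*} (G : SimpleGraph V) (a b c d e : V)
    (hac : a ≠ c) (had : a ≠ d) (hae : a ≠ e) (hbd : b ≠ d) (hbe : b ≠ e) (hce : c ≠ e)
    (e1 : G.Adj a b) (e2 : G.Adj b c) (e3 : G.Adj c d) (e4 : G.Adj d e)
    (n1 : ¬ G.Adj a c) (n2 : ¬ G.Adj a d) (n3 : ¬ G.Adj a e)
    (n4 : ¬ G.Adj b d) (n5 : ¬ G.Adj b e) (n6 : ¬ G.Adj c e) :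
    HasInducedCopy (SimpleGraph.pathGraph 5) G := by
  refine ⟨![a,b,c,d,e], ?_, ?_⟩
  · intro i j hij
    fin_cases i <;> fin_cases j <;> simp_all [G.ne_of_adj e1, G.ne_of_adj e2,
      G.ne_of_adj e3, G.ne_of_adj e4]
  · intro i j
    fin_cases i <;> fin_cases j <;>
      simp_all [pathGraph_adj, G.adj_comm, G.loopless] <;> decide

lemma chaircopy {V : Type*} (G : SimpleGraph V) (a b c d e : V)
    (hac : a ≠ c) (had : a ≠ d) (hae : a ≠ e) (hbd : b ≠ d) (hbe : b ≠ e) (hde : d ≠ e)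
    (e1 : G.Adj a b) (e2 : G.Adj b c) (e3 : G.Adj c d) (e4 : G.Adj c e)
    (n1 : ¬ G.Adj a c) (n2 : ¬ G.Adj a d) (n3 : ¬ G.Adj a e)
    (n4 : ¬ G.Adj b d) (n5 : ¬ G.Adj b e) (n6 : ¬ G.Adj d e) :
    HasInducedCopy chair G := by
  refine ⟨![a,b,c,d,e], ?_, ?_⟩
  · intro i j hij
    fin_cases i <;> fin_cases j <;> simp_all [G.ne_of_adj e1, G.ne_of_adj e2,
      G.ne_of_adj e3, G.ne_of_adj e4]
  · intro i j
    fin_cases i <;> fin_cases j <;>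
      simp_all [chair, G.adj_comm, G.loopless] <;> decide

lemma comb (m : Fin 5 → Bool) (h0 : ∃ j, m j = true)
    (h1 : ∀ i, m i = true → m (i+1) = true ∨ m (i+2) = true)
    (h2 : ∀ i, m i = true → m (i+2) = true → m (i+3) = true ∧ m (i+4) = true) :
    ∀ j, m j = true := by
  revert h0 h1 h2; revert m; decide

theorem stmt6 {V : Type*} [Fintype V] (G : SimpleGraph V)
    (hconn : G.Connected)
    (hP5 : ¬ HasInducedCopy (SimpleGraph.pathGraph 5) G)
    (hchair : ¬ HasInducedCopy chair G)
    (v : Fin 5 → V) (hC : IsInducedC5 G v)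
    (u : V) (hu : u ∉ Set.range v) (huC : ∀ j, ¬ G.Adj u (v j)) :
    ∀ w : V, G.Adj u w → (∃ j, G.Adj w (v j)) → ∀ j, G.Adj w (v j) := by
  classical
  intro w huw hex
  obtain ⟨hvinj, hadj⟩ := hC
  have hw : w ∉ Set.range v := by rintro ⟨k, rfl⟩; exact huC k huw
  have hwv : ∀ k, w ≠ v k := fun k h => hw ⟨k, h.symm⟩
  have huv : ∀ k, u ≠ v k := fun k h => hu ⟨k, h.symm⟩
  have hvv : ∀ k l : Fin 5, k ≠ l → v k ≠ v l := fun k l h hh => h (hvinj hh)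
  have eC : ∀ i j : Fin 5, (j = i+1 ∨ i = j+1) → G.Adj (v i) (v j) :=
    fun i j h => (hadj i j).2
      ((by decide : ∀ i j : Fin 5, (j = i+1 ∨ i = j+1) → cycle5.Adj i j) i j h)
  have nC : ∀ i j : Fin 5, (j = i+2 ∨ j = i+3) → ¬ G.Adj (v i) (v j) :=
    fun i j h ha =>
      ((by decide : ∀ i j : Fin 5, (j = i+2 ∨ j = i+3) → ¬ cycle5.Adj i j) i j h)
        ((hadj i j).1 ha)
  set m : Fin 5 → Bool := fun k => decide (G.Adj w (v k)) with hm
  have key : ∀ k, m k = true ↔ G.Adj w (v k) := fun k => by simp [hm]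
  have h0 : ∃ j, m j = true := hex.imp (fun j hj => (key j).2 hj)
  have h1 : ∀ i, m i = true → m (i+1) = true ∨ m (i+2) = true := by
    intro i hi
    by_contra hcon
    push_neg at hcon
    have hi' : G.Adj w (v i) := (key i).1 hi
    have hn1 : ¬ G.Adj w (v (i+1)) := fun h => hcon.1 ((key _).2 h)
    have hn2 : ¬ G.Adj w (v (i+2)) := fun h => hcon.2 ((key _).2 h)
    exact hP5 (p5copy G u w (v i) (v (i+1)) (v (i+2))
      (huv i) (huv (i+1)) (huv (i+2)) (hwv (i+1)) (hwv (i+2))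
      (hvv i (i+2) ((by decide : ∀ k : Fin 5, k ≠ k+2) i))
      huw hi' (eC i (i+1) (Or.inl rfl))
      (eC (i+1) (i+2) (Or.inl ((by decide : ∀ k : Fin 5, k+2 = (k+1)+1) i)))
      (huC i) (huC (i+1)) (huC (i+2)) hn1 hn2 (nC i (i+2) (Or.inl rfl)))
  have h2 : ∀ i, m i = true → m (i+2) = true → m (i+3) = true ∧ m (i+4) = true := by
    intro i hi hi2
    have hA : G.Adj w (v i) := (key i).1 hi
    have hB : G.Adj w (v (i+2)) := (key (i+2)).1 hi2
    constructor
    · by_contra hcon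
      have h3 : ¬ G.Adj w (v (i+3)) := fun h => hcon ((key _).2 h)
      exact hchair (chaircopy G (v (i+3)) (v (i+2)) w (v i) u
        (Ne.symm (hwv (i+3))) (hvv (i+3) i ((by decide : ∀ k : Fin 5, k+3 ≠ k) i))
        (Ne.symm (huv (i+3))) (hvv (i+2) i ((by decide : ∀ k : Fin 5, k+2 ≠ k) i))
        (Ne.symm (huv (i+2))) (Ne.symm (huv i))
        (eC (i+3) (i+2) (Or.inr ((by decide : ∀ k : Fin 5, k+3 = (k+2)+1) i)))
        hB.symm hA huw.symm
        (fun h => h3 h.symm)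
        (nC (i+3) i (Or.inl ((by decide : ∀ k : Fin 5, k = (k+3)+2) i)))
        (fun h => huC (i+3) h.symm)
        (nC (i+2) i (Or.inr ((by decide : ∀ k : Fin 5, k = (k+2)+3) i)))
        (fun h => huC (i+2) h.symm)
        (fun h => huC i h.symm))
    · by_contra hcon
      have h4 : ¬ G.Adj w (v (i+4)) := fun h => hcon ((key _).2 h)
      exact hchair (chaircopy G (v (i+4)) (v i) w (v (i+2)) u
        (Ne.symm (hwv (i+4))) (hvv (i+4) (i+2) ((by decide : ∀ k : Fin 5, k+4 ≠ k+2) i))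
        (Ne.symm (huv (i+4))) (hvv i (i+2) ((by decide : ∀ k : Fin 5, k ≠ k+2) i))
        (Ne.symm (huv i)) (Ne.symm (huv (i+2)))
        (eC (i+4) i (Or.inl ((by decide : ∀ k : Fin 5, k = (k+4)+1) i)))
        hA.symm hB huw.symm
        (fun h => h4 h.symm)
        (nC (i+4) (i+2) (Or.inr ((by decide : ∀ k : Fin 5, k+2 = (k+4)+3) i)))
        (fun h => huC (i+4) h.symm)
        (nC i (i+2) (Or.inl rfl))
        (fun h => huC i h.symm)
        (fun h => huC (i+2) h.symm))
  exact fun j => (key j).1 (comb m h0 h1 h2 j)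
end

section
/- Let G be a chair-free graph containing an induced 5-cycle C = v1...v5. Let S²₃(i) be the set of vertices outside C adjacent on C exactly to {v_{i−2}, v_i, v_{i+2}}, and let s be a vertex adjacent to all of v_{i−2}, v_{i−1}, v_{i+1}, v_{i+2} (i.e., s ∈ S₄(i) ∪ S₅). Then s does not distinguish any edge of G[S²₃(i)]: if u,v ∈ S²₃(i) are adjacent and s is adjacent to u, then s is adjacent to v. -/
open SimpleGraph

theorem stmt8 {V : Type*} [Fintype V] (G : SimpleGraph V)
    (hchair : ¬ HasInducedCopy chair G)
    (v : Fin 5 → V) (hC : IsInducedC5 G v) (i : Fin 5)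
    (s : V) (hs : s ∈ S4 G v i ∪ S5 G v)
    (x y : V) (hx : x ∈ S23 G v i) (hy : y ∈ S23 G v i)
    (hxy : G.Adj x y) (hsx : G.Adj s x) : G.Adj s y := by

  obtain ⟨hvinj, hvadj⟩ := hC
  obtain ⟨hxr, hxadj⟩ := hx
  obtain ⟨hyr, hyadj⟩ := hy
  by_contra hsy
  have key : ∀ j : Fin 5, ¬(j - 1 = j - 2 ∨ j - 1 = j ∨ j - 1 = j + 2) := by decide
  have key2 : ∀ j : Fin 5, ¬(j + 1 = j - 2 ∨ j + 1 = j ∨ j + 1 = j + 2) := by decide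
  have key3 : ∀ j : Fin 5, ¬ cycle5.Adj (j - 1) (j + 1) := by
    intro j
    rw [cycle5, SimpleGraph.fromRel_adj]
    revert j; decide
  have key5 : ∀ j : Fin 5, j - 1 ≠ j + 1 := by decide
  have key4 : ∀ j : Fin 5, j - 1 ≠ j ∧ j + 1 ≠ j := by decide
  -- s facts
  have hsS : s ∉ Set.range v ∧ G.Adj s (v (i - 1)) ∧ G.Adj s (v (i + 1)) := by
    rcases hs with h | h
    · exact ⟨h.1, (h.2 (i - 1)).mpr (key4 i).1, (h.2 (i + 1)).mpr (key4 i).2⟩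
    · exact ⟨h.1, h.2 _, h.2 _⟩
  obtain ⟨hsr, hsm, hsp⟩ := hsS
  have nym : ¬ G.Adj y (v (i - 1)) := fun h => key i ((hyadj (i - 1)).mp h)
  have nyp : ¬ G.Adj y (v (i + 1)) := fun h => key2 i ((hyadj (i + 1)).mp h)
  have nxm : ¬ G.Adj x (v (i - 1)) := fun h => key i ((hxadj (i - 1)).mp h)
  have nxp : ¬ G.Adj x (v (i + 1)) := fun h => key2 i ((hxadj (i + 1)).mp h)
  have nvv : ¬ G.Adj (v (i - 1)) (v (i + 1)) := fun h => key3 i ((hvadj _ _).mp h)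
  -- distinctness
  have dys : y ≠ s := fun h => nym (h ▸ hsm)
  have dyx : y ≠ x := hxy.ne'
  have dxs : x ≠ s := hsx.ne'
  have dyv1 : y ≠ v (i - 1) := fun h => hyr ⟨i - 1, h.symm⟩
  have dyv2 : y ≠ v (i + 1) := fun h => hyr ⟨i + 1, h.symm⟩
  have dxv1 : x ≠ v (i - 1) := fun h => hxr ⟨i - 1, h.symm⟩
  have dxv2 : x ≠ v (i + 1) := fun h => hxr ⟨i + 1, h.symm⟩
  have dsv1 : s ≠ v (i - 1) := fun h => hsr ⟨i - 1, h.symm⟩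
  have dsv2 : s ≠ v (i + 1) := fun h => hsr ⟨i + 1, h.symm⟩
  have dvv : v (i - 1) ≠ v (i + 1) := fun h => key5 i (hvinj h)
  apply hchair
  refine ⟨![y, x, s, v (i - 1), v (i + 1)], ?_, ?_⟩
  · intro a b hab
    fin_cases a <;> fin_cases b <;>
      simp only [Matrix.cons_val_zero, Matrix.cons_val_one, Matrix.head_cons,
        Matrix.cons_val_two, Matrix.tail_cons, Matrix.cons_val_three,
        Matrix.cons_val_four, Matrix.cons_val_fin_one] at hab <;>
      first
        | rfl
        | exact absurd hab (by assumption)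
        | exact absurd hab.symm (by assumption)
  · intro a b
    have hyx := hxy.symm
    have hxs := hsx.symm
    have hsm' := hsm.symm
    have hsp' := hsp.symm
    have nsy : ¬ G.Adj s y := hsy
    have nys : ¬ G.Adj y s := fun h => hsy h.symm
    have nym' : ¬ G.Adj (v (i - 1)) y := fun h => nym h.symm
    have nyp' : ¬ G.Adj (v (i + 1)) y := fun h => nyp h.symm
    have nxm' : ¬ G.Adj (v (i - 1)) x := fun h => nxm h.symm
    have nxp' : ¬ G.Adj (v (i + 1)) x := fun h => nxp h.symm
    have nvv' : ¬ G.Adj (v (i + 1)) (v (i - 1)) := fun h => nvv h.symm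
    fin_cases a <;> fin_cases b <;>
      simp only [Matrix.cons_val_zero, Matrix.cons_val_one, Matrix.head_cons,
        Matrix.cons_val_two, Matrix.tail_cons, Matrix.cons_val_three,
        Matrix.cons_val_four, Matrix.cons_val_fin_one] <;>
      first
        | exact iff_of_true (by assumption) (by rw [chair, SimpleGraph.fromRel_adj]; decide)
        | exact iff_of_false (by assumption) (by rw [chair, SimpleGraph.fromRel_adj]; decide)
        | exact iff_of_false (G.irrefl) (by rw [chair, SimpleGraph.fromRel_adj]; decide)
end

section
/- Let G be a (P5, chair)-free graph containing an induced 5-cycle C = v1...v5. Every vertex of V(G)∖(S²₃(i) ∪ S₄(i) ∪ S₅) that has a neighbor on C is either complete or anticomplete to S²₃(i). -/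
open SimpleGraph

/-! After rotating `C` we may take `i = 0`, so that every `x ∈ S²₃(0)` sees exactly `v₀, v₂, v₃`.
The adjacency of `w` to such an `x` is then determined by the trace of `w` on `C`: `w` misses `x`
exactly when `w ∈ S¹₃(1) ∪ S¹₃(4)`. Both directions are a case analysis on which of `v₁, v₄` the
vertex `w` sees, and each configuration to be excluded contains an induced `P₅` or chair on
`C ∪ {w, x}`. -/

section

variable {V : Type*} {G : SimpleGraph V}

theorem cycle5_adj {a b : Fin 5} : cycle5.Adj a b ↔ b = a + 1 ∨ a = b + 1 := by
  simp only [cycle5, fromRel_adj]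
  revert a b
  decide

theorem chair_adj {a b : Fin 5} :
    chair.Adj a b ↔ (a, b) ∈ [(0, 1), (1, 0), (1, 2), (2, 1), (2, 3), (3, 2), (2, 4), (4, 2)] := by
  simp only [chair, fromRel_adj]
  revert a b
  decide

theorem adj_iff_adj_of_map_eq {α : Type*} {H : SimpleGraph α} {f : α → V}
    (hf : ∀ a b, G.Adj (f a) (f b) ↔ H.Adj a b) {a b : α} (h : f a = f b) (c : α) :
    H.Adj a c ↔ H.Adj b c := by
  rw [← hf, ← hf, h]

theorem hasInducedCopy_pathGraph_five (a b c d e : V)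
    (hab : G.Adj a b) (hbc : G.Adj b c) (hcd : G.Adj c d) (hde : G.Adj d e)
    (hac : ¬G.Adj a c) (had : ¬G.Adj a d) (hae : ¬G.Adj a e)
    (hbd : ¬G.Adj b d) (hbe : ¬G.Adj b e) (hce : ¬G.Adj c e) :
    HasInducedCopy (pathGraph 5) G := by
  have hf : ∀ p q, G.Adj (![a, b, c, d, e] p) (![a, b, c, d, e] q) ↔ (pathGraph 5).Adj p q := by
    intro p q
    fin_cases p <;> fin_cases q <;>
      simp [pathGraph_adj, hab, hbc, hcd, hde, hac, had, hae, hbd, hbe, hce, G.adj_comm _ a,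
        G.adj_comm _ b, G.adj_comm _ c, G.adj_comm _ d]
  -- `P₅` has no two vertices with the same neighbourhood, so `hf` forces injectivity.
  refine ⟨_, fun p q h => ?_, hf⟩
  have := adj_iff_adj_of_map_eq hf h
  revert this
  simp only [pathGraph_adj]
  fin_cases p <;> fin_cases q <;> decide

theorem hasInducedCopy_chair (a b c d e : V)
    (hab : G.Adj a b) (hbc : G.Adj b c) (hcd : G.Adj c d) (hce : G.Adj c e)
    (hac : ¬G.Adj a c) (had : ¬G.Adj a d) (hae : ¬G.Adj a e)
    (hbd : ¬G.Adj b d) (hbe : ¬G.Adj b e) (hde : ¬G.Adj d e) (hne : d ≠ e) :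
    HasInducedCopy chair G := by
  have hf : ∀ p q, G.Adj (![a, b, c, d, e] p) (![a, b, c, d, e] q) ↔ chair.Adj p q := by
    intro p q
    fin_cases p <;> fin_cases q <;>
      simp [chair_adj, hab, hbc, hcd, hce, hac, had, hae, hbd, hbe, hde, G.adj_comm _ a,
        G.adj_comm _ b, G.adj_comm _ c, G.adj_comm _ d]
  -- The two leaves `3` and `4` at the centre are the only twins of the chair.
  refine ⟨_, fun p q h => ?_, hf⟩
  have := adj_iff_adj_of_map_eq hf h
  revert this
  simp only [chair_adj]
  fin_cases p <;> fin_cases q <;> first | decide | exact absurd h hne | exact absurd h.symm hne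

theorem forall_fin_five_iff_add {P : Fin 5 → Prop} (j : Fin 5) :
    (∀ k, P k) ↔ P j ∧ P (j + 1) ∧ P (j + 2) ∧ P (j + 3) ∧ P (j + 4) := by
  refine ⟨fun h => ⟨h _, h _, h _, h _, h _⟩, fun ⟨h0, h1, h2, h3, h4⟩ k => ?_⟩
  obtain ⟨m, rfl⟩ : ∃ m, k = j + m := ⟨k - j, (add_sub_cancel j k).symm⟩
  fin_cases m
  exacts [by simpa using h0, h1, h2, h3, h4]

section rotation

variable {v : Fin 5 → V} (i : Fin 5)

theorem IsInducedC5.rotate (hC : IsInducedC5 G v) : IsInducedC5 G (fun k => v (i + k)) :=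
  ⟨hC.1.comp (add_right_injective i), fun a b =>
    (hC.2 _ _).trans (by simp only [cycle5_adj, add_assoc, add_right_inj])⟩

theorem range_rotate : Set.range (fun k => v (i + k)) = Set.range v :=
  (Equiv.addLeft i).surjective.range_comp v

theorem forall_adj_rotate_iff {x : V} {P Q : Fin 5 → Prop} (hPQ : ∀ k, P k ↔ Q (i + k)) :
    (∀ k, G.Adj x (v (i + k)) ↔ P k) ↔ ∀ j, G.Adj x (v j) ↔ Q j :=
  (forall_congr' fun k => iff_congr Iff.rfl (hPQ k)).trans
  ((Equiv.addLeft i).forall_congr_right (q := fun j => G.Adj x (v j) ↔ Q j))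

theorem S23_rotate : S23 G (fun k => v (i + k)) 0 = S23 G v i := by
  ext x
  exact and_congr (by rw [range_rotate]) (forall_adj_rotate_iff i fun k => by grind)

theorem S4_rotate : S4 G (fun k => v (i + k)) 0 = S4 G v i := by
  ext x
  exact and_congr (by rw [range_rotate]) (forall_adj_rotate_iff i fun k => by grind)

theorem S5_rotate : S5 G (fun k => v (i + k)) = S5 G v := by
  ext x
  exact and_congr (by rw [range_rotate])
    ((Equiv.addLeft i).forall_congr_right (q := fun j => G.Adj x (v j)))

end rotation

namespace IsInducedC5

variable {v : Fin 5 → V} {w x : V}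

theorem adj_iff (hC : IsInducedC5 G v) {a b : Fin 5} :
    G.Adj (v a) (v b) ↔ b = a + 1 ∨ a = b + 1 :=
  (hC.2 a b).trans cycle5_adj

theorem adj_add_three_of_adj (hP5 : ¬HasInducedCopy (pathGraph 5) G) (hC : IsInducedC5 G v)
    {j : Fin 5} (h0 : G.Adj w (v j)) (h1 : ¬G.Adj w (v (j + 1))) (h2 : ¬G.Adj w (v (j + 2))) :
    G.Adj w (v (j + 3)) := by
  by_contra h3
  refine hP5 (hasInducedCopy_pathGraph_five w (v j) (v (j + 1)) (v (j + 2)) (v (j + 3))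
    h0 ?_ ?_ ?_ ?_ ?_ ?_ ?_ ?_ ?_) <;> grind [hC.adj_iff, G.adj_comm]

theorem adj_add_two_of_adj (hP5 : ¬HasInducedCopy (pathGraph 5) G) (hC : IsInducedC5 G v)
    {j : Fin 5} (h0 : G.Adj w (v j)) (h4 : ¬G.Adj w (v (j + 4))) (h3 : ¬G.Adj w (v (j + 3))) :
    G.Adj w (v (j + 2)) := by
  by_contra h2
  refine hP5 (hasInducedCopy_pathGraph_five w (v j) (v (j + 4)) (v (j + 3)) (v (j + 2))
    h0 ?_ ?_ ?_ ?_ ?_ ?_ ?_ ?_ ?_) <;> grind [hC.adj_iff, G.adj_comm]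

theorem mem_S13_of_adj (hP5 : ¬HasInducedCopy (pathGraph 5) G) (hC : IsInducedC5 G v)
    (hw : w ∉ Set.range v) {j : Fin 5} (h0 : G.Adj w (v j)) (h2 : ¬G.Adj w (v (j + 2)))
    (h3 : ¬G.Adj w (v (j + 3))) : w ∈ S13 G v j := by
  have h1 : G.Adj w (v (j + 1)) := by_contra fun h1 => h3 (hC.adj_add_three_of_adj hP5 h0 h1 h2)
  have h4 : G.Adj w (v (j + 4)) := by_contra fun h4 => h2 (hC.adj_add_two_of_adj hP5 h0 h4 h3)
  refine ⟨hw, (forall_fin_five_iff_add j).2 ?_⟩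
  grind

theorem mem_S23_of_adj (hchair : ¬HasInducedCopy chair G) (hC : IsInducedC5 G v)
    (hw : w ∉ Set.range v) {j : Fin 5} (h0 : G.Adj w (v j)) (h1 : ¬G.Adj w (v (j + 1)))
    (h4 : ¬G.Adj w (v (j + 4))) : w ∈ S23 G v j := by
  have h2 : G.Adj w (v (j + 2)) := by
    by_contra h2
    refine hchair (hasInducedCopy_chair (v (j + 2)) (v (j + 1)) (v j) w (v (j + 4))
      ?_ ?_ ?_ ?_ ?_ ?_ ?_ ?_ ?_ ?_ fun h => hw ⟨_, h.symm⟩) <;> grind [hC.adj_iff, G.adj_comm]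
  have h3 : G.Adj w (v (j + 3)) := by
    by_contra h3
    refine hchair (hasInducedCopy_chair (v (j + 3)) (v (j + 4)) (v j) w (v (j + 1))
      ?_ ?_ ?_ ?_ ?_ ?_ ?_ ?_ ?_ ?_ fun h => hw ⟨_, h.symm⟩) <;> grind [hC.adj_iff, G.adj_comm]
  refine ⟨hw, (forall_fin_five_iff_add j).2 ?_⟩
  grind

theorem not_adj_of_mem_S13_one (hP5 : ¬HasInducedCopy (pathGraph 5) G) (hC : IsInducedC5 G v)
    (hx : x ∈ S23 G v 0) (hw : w ∈ S13 G v 1) : ¬G.Adj w x := by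
  intro hwx
  refine hP5 (hasInducedCopy_pathGraph_five (v 1) w x (v 3) (v 4)
    ?_ hwx ?_ ?_ ?_ ?_ ?_ ?_ ?_ ?_) <;> grind [hC.adj_iff, hx.2, hw.2, G.adj_comm]

theorem not_adj_of_mem_S13_four (hP5 : ¬HasInducedCopy (pathGraph 5) G) (hC : IsInducedC5 G v)
    (hx : x ∈ S23 G v 0) (hw : w ∈ S13 G v 4) : ¬G.Adj w x := by
  intro hwx
  refine hP5 (hasInducedCopy_pathGraph_five (v 4) w x (v 2) (v 1)
    ?_ hwx ?_ ?_ ?_ ?_ ?_ ?_ ?_ ?_) <;> grind [hC.adj_iff, hx.2, hw.2, G.adj_comm]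

theorem adj_two_and_adj_three_of_not_adj (hP5 : ¬HasInducedCopy (pathGraph 5) G)
    (hC : IsInducedC5 G v) (hx : x ∈ S23 G v 0) (hwx : ¬G.Adj w x) (h1 : G.Adj w (v 1))
    (h4 : G.Adj w (v 4)) : G.Adj w (v 2) ∧ G.Adj w (v 3) := by
  constructor <;> by_contra h
  · refine hP5 (hasInducedCopy_pathGraph_five (v 4) w (v 1) (v 2) x
      ?_ ?_ ?_ ?_ ?_ ?_ ?_ ?_ ?_ ?_) <;> grind [hC.adj_iff, hx.2, G.adj_comm]
  · refine hP5 (hasInducedCopy_pathGraph_five (v 1) w (v 4) (v 3) x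
      ?_ ?_ ?_ ?_ ?_ ?_ ?_ ?_ ?_ ?_) <;> grind [hC.adj_iff, hx.2, G.adj_comm]

theorem not_adj_three_of_not_adj (hchair : ¬HasInducedCopy chair G) (hC : IsInducedC5 G v)
    (hx : x ∈ S23 G v 0) (hwx : ¬G.Adj w x) (h1 : G.Adj w (v 1)) (h4 : ¬G.Adj w (v 4)) :
    ¬G.Adj w (v 3) := by
  intro h3
  refine hchair (hasInducedCopy_chair (v 1) w (v 3) (v 4) x
    ?_ ?_ ?_ ?_ ?_ ?_ ?_ ?_ ?_ ?_ fun h => hx.1 ⟨_, h⟩) <;> grind [hC.adj_iff, hx.2, G.adj_comm]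

theorem not_adj_two_of_not_adj (hchair : ¬HasInducedCopy chair G) (hC : IsInducedC5 G v)
    (hx : x ∈ S23 G v 0) (hwx : ¬G.Adj w x) (h4 : G.Adj w (v 4)) (h1 : ¬G.Adj w (v 1)) :
    ¬G.Adj w (v 2) := by
  intro h2
  refine hchair (hasInducedCopy_chair (v 4) w (v 2) (v 1) x
    ?_ ?_ ?_ ?_ ?_ ?_ ?_ ?_ ?_ ?_ fun h => hx.1 ⟨_, h⟩) <;> grind [hC.adj_iff, hx.2, G.adj_comm]

theorem mem_S13_one_or_mem_S13_four_of_not_adj (hP5 : ¬HasInducedCopy (pathGraph 5) G)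
    (hchair : ¬HasInducedCopy chair G) (hC : IsInducedC5 G v) (hx : x ∈ S23 G v 0)
    (hw : w ∉ Set.range v) (hwC : ∃ j, G.Adj w (v j)) (hwx : ¬G.Adj w x) :
    w ∈ S13 G v 1 ∨ w ∈ S13 G v 4 ∨ w ∈ S23 G v 0 ∪ S4 G v 0 ∪ S5 G v := by
  by_cases h1 : G.Adj w (v 1) <;> by_cases h4 : G.Adj w (v 4)
  · obtain ⟨h2, h3⟩ := hC.adj_two_and_adj_three_of_not_adj hP5 hx hwx h1 h4
    refine .inr <| .inr ?_
    by_cases h0 : G.Adj w (v 0)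
    · exact Set.mem_union_right _ ⟨hw, fun k => by fin_cases k <;> assumption⟩
    · exact Set.mem_union_left _ <| Set.mem_union_right _
        ⟨hw, fun k => by fin_cases k <;> simp [*]⟩
  · exact .inl (hC.mem_S13_of_adj hP5 hw h1 (hC.not_adj_three_of_not_adj hchair hx hwx h1 h4) h4)
  · exact .inr <| .inl <|
      hC.mem_S13_of_adj hP5 hw h4 h1 (hC.not_adj_two_of_not_adj hchair hx hwx h4 h1)
  · refine .inr <| .inr <| Set.mem_union_left _ <| Set.mem_union_left _ <|
      hC.mem_S23_of_adj hchair hw ?_ h1 h4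
    by_contra h0
    obtain ⟨j, hj⟩ := hwC
    fin_cases j
    exacts [h0 hj, h1 hj, h4 (hC.adj_add_two_of_adj hP5 hj h1 h0),
      h1 (hC.adj_add_three_of_adj hP5 hj h4 h0), h4 hj]

theorem adj_iff_of_mem_S23_zero (hP5 : ¬HasInducedCopy (pathGraph 5) G)
    (hchair : ¬HasInducedCopy chair G) (hC : IsInducedC5 G v) (hx : x ∈ S23 G v 0)
    (hwv : w ∉ Set.range v) (hw : w ∉ S23 G v 0 ∪ S4 G v 0 ∪ S5 G v)
    (hwC : ∃ j, G.Adj w (v j)) : G.Adj w x ↔ w ∉ S13 G v 1 ∧ w ∉ S13 G v 4 := by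
  refine ⟨fun hwx => ⟨fun h => hC.not_adj_of_mem_S13_one hP5 hx h hwx,
    fun h => hC.not_adj_of_mem_S13_four hP5 hx h hwx⟩, fun ⟨h1, h4⟩ => by_contra fun hwx => ?_⟩
  rcases hC.mem_S13_one_or_mem_S13_four_of_not_adj hP5 hchair hx hwv hwC hwx with h | h | h
  exacts [h1 h, h4 h, hw h]

end IsInducedC5

end

theorem stmt9_general {V : Type*} (G : SimpleGraph V)
    (hP5 : ¬ HasInducedCopy (SimpleGraph.pathGraph 5) G)
    (hchair : ¬ HasInducedCopy chair G)
    (v : Fin 5 → V) (hC : IsInducedC5 G v) (i : Fin 5)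
    (w : V) (hw : w ∉ S23 G v i ∪ S4 G v i ∪ S5 G v)
    (hwC : ∃ j, G.Adj w (v j)) :
    (∀ x ∈ S23 G v i, G.Adj w x) ∨ (∀ x ∈ S23 G v i, ¬ G.Adj w x) := by
  rcases em (w ∈ Set.range v) with ⟨j, rfl⟩ | hwv
  · by_cases hj : j = i - 2 ∨ j = i ∨ j = i + 2
    · exact .inl fun x hx => ((hx.2 j).2 hj).symm
    · exact .inr fun x hx h => hj ((hx.2 j).1 h.symm)
  obtain ⟨j, hj⟩ := hwC
  rw [← S23_rotate i] at hw ⊢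
  rw [← S4_rotate i, ← S5_rotate i] at hw
  have key := fun x (hx : x ∈ S23 G (fun k => v (i + k)) 0) =>
    (hC.rotate i).adj_iff_of_mem_S23_zero hP5 hchair hx (by rwa [range_rotate]) hw
      ⟨j - i, by rwa [add_sub_cancel]⟩
  by_cases h : w ∉ S13 G (fun k => v (i + k)) 1 ∧ w ∉ S13 G (fun k => v (i + k)) 4
  · exact .inl fun x hx => (key x hx).2 h
  · exact .inr fun x hx hwx => h ((key x hx).1 hwx)

theorem stmt9 {V : Type*} [Fintype V] (G : SimpleGraph V)
    (hP5 : ¬ HasInducedCopy (SimpleGraph.pathGraph 5) G)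
    (hchair : ¬ HasInducedCopy chair G)
    (v : Fin 5 → V) (hC : IsInducedC5 G v) (i : Fin 5)
    (w : V) (hw : w ∉ S23 G v i ∪ S4 G v i ∪ S5 G v)
    (hwC : ∃ j, G.Adj w (v j)) :
    (∀ x ∈ S23 G v i, G.Adj w x) ∨ (∀ x ∈ S23 G v i, ¬ G.Adj w x) :=
  stmt9_general G hP5 hchair v hC i w hw hwC
end

section
/- Let G be a (P5, chair)-free graph containing an induced 5-cycle C = v1...v5. Then every vertex in S₄(i) is adjacent to every vertex in S¹₃(i+2) ∪ S¹₃(i−2) ∪ S²₃(i+1) ∪ S²₃(i−1) ∪ S²₃(i+2) ∪ S²₃(i−2). -/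
open SimpleGraph

lemma hasP5 {V : Type*} (G : SimpleGraph V) (a b c d e : V)
    (h1 : G.Adj a b) (h2 : G.Adj b c) (h3 : G.Adj c d) (h4 : G.Adj d e)
    (n1 : ¬G.Adj a c) (n2 : ¬G.Adj a d) (n3 : ¬G.Adj a e)
    (n4 : ¬G.Adj b d) (n5 : ¬G.Adj b e) (n6 : ¬G.Adj c e) :
    HasInducedCopy (SimpleGraph.pathGraph 5) G := by
  refine ⟨![a,b,c,d,e], ?_, ?_⟩
  · intro p q hpq
    fin_cases p <;> fin_cases q <;> simp_all [G.adj_comm]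
  · have pg : ∀ s t : Fin 5, (SimpleGraph.pathGraph 5).Adj s t ↔ (s.val + 1 = t.val ∨ t.val + 1 = s.val) :=
      fun s t => SimpleGraph.pathGraph_adj
    intro p q
    fin_cases p <;> fin_cases q <;> rw [pg]
    · exact iff_of_false G.irrefl (by decide)
    · exact iff_of_true h1 (by decide)
    · exact iff_of_false n1 (by decide)
    · exact iff_of_false n2 (by decide)
    · exact iff_of_false n3 (by decide)
    · exact iff_of_true h1.symm (by decide)
    · exact iff_of_false G.irrefl (by decide)
    · exact iff_of_true h2 (by decide)
    · exact iff_of_false n4 (by decide)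
    · exact iff_of_false n5 (by decide)
    · exact iff_of_false (fun hh => n1 hh.symm) (by decide)
    · exact iff_of_true h2.symm (by decide)
    · exact iff_of_false G.irrefl (by decide)
    · exact iff_of_true h3 (by decide)
    · exact iff_of_false n6 (by decide)
    · exact iff_of_false (fun hh => n2 hh.symm) (by decide)
    · exact iff_of_false (fun hh => n4 hh.symm) (by decide)
    · exact iff_of_true h3.symm (by decide)
    · exact iff_of_false G.irrefl (by decide)
    · exact iff_of_true h4 (by decide)
    · exact iff_of_false (fun hh => n3 hh.symm) (by decide)
    · exact iff_of_false (fun hh => n5 hh.symm) (by decide)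
    · exact iff_of_false (fun hh => n6 hh.symm) (by decide)
    · exact iff_of_true h4.symm (by decide)
    · exact iff_of_false G.irrefl (by decide)

lemma hasChair {V : Type*} (G : SimpleGraph V) (a b c d e : V)
    (h1 : G.Adj a b) (h2 : G.Adj b c) (h3 : G.Adj c d) (h4 : G.Adj c e)
    (n1 : ¬G.Adj a c) (n2 : ¬G.Adj a d) (n3 : ¬G.Adj a e)
    (n4 : ¬G.Adj b d) (n5 : ¬G.Adj b e) (n6 : ¬G.Adj d e) (hde : d ≠ e) :
    HasInducedCopy chair G := by
  have cg : ∀ s t : Fin 5, chair.Adj s t ↔ s ≠ t ∧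
      ((s,t) ∈ [((0 : Fin 5), (1 : Fin 5)), (1, 2), (2, 3), (2, 4)] ∨
       (t,s) ∈ [((0 : Fin 5), (1 : Fin 5)), (1, 2), (2, 3), (2, 4)]) :=
    fun s t => by rw [chair, SimpleGraph.fromRel_adj]
  refine ⟨![a,b,c,d,e], ?_, ?_⟩
  · intro p q hpq
    fin_cases p <;> fin_cases q <;> simp_all [G.adj_comm]
  · intro p q
    fin_cases p <;> fin_cases q <;> rw [cg]
    · exact iff_of_false G.irrefl (by decide)
    · exact iff_of_true h1 (by decide)
    · exact iff_of_false n1 (by decide)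
    · exact iff_of_false n2 (by decide)
    · exact iff_of_false n3 (by decide)
    · exact iff_of_true h1.symm (by decide)
    · exact iff_of_false G.irrefl (by decide)
    · exact iff_of_true h2 (by decide)
    · exact iff_of_false n4 (by decide)
    · exact iff_of_false n5 (by decide)
    · exact iff_of_false (fun hh => n1 hh.symm) (by decide)
    · exact iff_of_true h2.symm (by decide)
    · exact iff_of_false G.irrefl (by decide)
    · exact iff_of_true h3 (by decide)
    · exact iff_of_true h4 (by decide)
    · exact iff_of_false (fun hh => n2 hh.symm) (by decide)
    · exact iff_of_false (fun hh => n4 hh.symm) (by decide)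
    · exact iff_of_true h3.symm (by decide)
    · exact iff_of_false G.irrefl (by decide)
    · exact iff_of_false n6 (by decide)
    · exact iff_of_false (fun hh => n3 hh.symm) (by decide)
    · exact iff_of_false (fun hh => n5 hh.symm) (by decide)
    · exact iff_of_true h4.symm (by decide)
    · exact iff_of_false (fun hh => n6 hh.symm) (by decide)
    · exact iff_of_false G.irrefl (by decide)
theorem stmt10 {V : Type*} [Fintype V] (G : SimpleGraph V)
    (hP5 : ¬ HasInducedCopy (SimpleGraph.pathGraph 5) G)
    (hchair : ¬ HasInducedCopy chair G)
    (v : Fin 5 → V) (hC : IsInducedC5 G v) (i : Fin 5)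
    (u : V) (hu : u ∈ S4 G v i)
    (x : V)
    (hx : x ∈ S13 G v (i + 2) ∪ S13 G v (i - 2) ∪ S23 G v (i + 1) ∪ S23 G v (i - 1)
        ∪ S23 G v (i + 2) ∪ S23 G v (i - 2)) :
    G.Adj u x := by
  by_contra hadj
  obtain ⟨hu1, hu2⟩ := hu
  obtain ⟨hvinj, hvadj⟩ := hC
  have cyc : ∀ s t : Fin 5, cycle5.Adj s t ↔ (s ≠ t ∧ (t = s + 1 ∨ s = t + 1)) :=
    fun s t => by rw [cycle5, SimpleGraph.fromRel_adj]
  have rot : ∀ (i a b : Fin 5),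
      ((i + a ≠ i + b ∧ (i + b = i + a + 1 ∨ i + a = i + b + 1)) ↔
        (a ≠ b ∧ (b = a + 1 ∨ a = b + 1))) := by decide
  have E : ∀ a b : Fin 5, G.Adj (v (i + a)) (v (i + b)) ↔ (a ≠ b ∧ (b = a + 1 ∨ a = b + 1)) :=
    fun a b => (hvadj _ _).trans ((cyc _ _).trans (rot i a b))
  have eqz : ∀ (i k : Fin 5), (i + k ≠ i) ↔ k ≠ 0 := by decide
  have U : ∀ k : Fin 5, G.Adj u (v (i + k)) ↔ k ≠ 0 := fun k => (hu2 _).trans (eqz i k)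
  rcases hx with (((((hc | hc) | hc) | hc) | hc) | hc)
  · -- S13(i+2) : X k ↔ k ∈ {1,2,3};  P5 : w0 w4 u w2 x
    obtain ⟨hx1, hx2⟩ := hc
    have tr : ∀ (i k : Fin 5),
        ((i + k = (i + 2) - 1 ∨ i + k = i + 2 ∨ i + k = (i + 2) + 1) ↔ (k = 1 ∨ k = 2 ∨ k = 3)) := by
      decide
    have X : ∀ k : Fin 5, G.Adj x (v (i + k)) ↔ (k = 1 ∨ k = 2 ∨ k = 3) :=
      fun k => (hx2 _).trans (tr i k)
    exact hP5 (hasP5 G (v (i + 0)) (v (i + 4)) u (v (i + 2)) x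
      ((E 0 4).2 (by decide)) ((U 4).2 (by decide)).symm ((U 2).2 (by decide))
      ((X 2).2 (by decide)).symm
      (fun hh => ((U 0).1 hh.symm) rfl)
      (fun hh => (((E 0 2).1 hh).2.elim (by decide) (by decide)))
      (fun hh => ((X 0).1 hh.symm).elim (by decide) (fun h' => h'.elim (by decide) (by decide)))
      (fun hh => (((E 4 2).1 hh).2.elim (by decide) (by decide)))
      (fun hh => ((X 4).1 hh.symm).elim (by decide) (fun h' => h'.elim (by decide) (by decide)))
      hadj)
  · -- S13(i-2) : X k ↔ k ∈ {2,3,4};  P5 : w0 w1 u w3 x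
    obtain ⟨hx1, hx2⟩ := hc
    have tr : ∀ (i k : Fin 5),
        ((i + k = (i - 2) - 1 ∨ i + k = i - 2 ∨ i + k = (i - 2) + 1) ↔ (k = 2 ∨ k = 3 ∨ k = 4)) := by
      decide
    have X : ∀ k : Fin 5, G.Adj x (v (i + k)) ↔ (k = 2 ∨ k = 3 ∨ k = 4) :=
      fun k => (hx2 _).trans (tr i k)
    exact hP5 (hasP5 G (v (i + 0)) (v (i + 1)) u (v (i + 3)) x
      ((E 0 1).2 (by decide)) ((U 1).2 (by decide)).symm ((U 3).2 (by decide))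
      ((X 3).2 (by decide)).symm
      (fun hh => ((U 0).1 hh.symm) rfl)
      (fun hh => (((E 0 3).1 hh).2.elim (by decide) (by decide)))
      (fun hh => ((X 0).1 hh.symm).elim (by decide) (fun h' => h'.elim (by decide) (by decide)))
      (fun hh => (((E 1 3).1 hh).2.elim (by decide) (by decide)))
      (fun hh => ((X 1).1 hh.symm).elim (by decide) (fun h' => h'.elim (by decide) (by decide)))
      hadj)
  · -- S23(i+1) : X k ↔ k ∈ {1,3,4};  chair : w2 u w4 x w0
    obtain ⟨hx1, hx2⟩ := hc
    have tr : ∀ (i k : Fin 5),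
        ((i + k = (i + 1) - 2 ∨ i + k = i + 1 ∨ i + k = (i + 1) + 2) ↔ (k = 4 ∨ k = 1 ∨ k = 3)) := by
      decide
    have X : ∀ k : Fin 5, G.Adj x (v (i + k)) ↔ (k = 4 ∨ k = 1 ∨ k = 3) :=
      fun k => (hx2 _).trans (tr i k)
    exact hchair (hasChair G (v (i + 2)) u (v (i + 4)) x (v (i + 0))
      ((U 2).2 (by decide)).symm ((U 4).2 (by decide)) ((X 4).2 (by decide)).symm
      ((E 4 0).2 (by decide))
      (fun hh => (((E 2 4).1 hh).2.elim (by decide) (by decide)))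
      (fun hh => ((X 2).1 hh.symm).elim (by decide) (fun h' => h'.elim (by decide) (by decide)))
      (fun hh => (((E 2 0).1 hh).2.elim (by decide) (by decide)))
      hadj
      (fun hh => ((U 0).1 hh) rfl)
      (fun hh => ((X 0).1 hh).elim (by decide) (fun h' => h'.elim (by decide) (by decide)))
      (fun heq => hx1 ⟨i + 0, heq.symm⟩))
  · -- S23(i-1) : X k ↔ k ∈ {1,2,4};  chair : w3 u w1 x w0
    obtain ⟨hx1, hx2⟩ := hc
    have tr : ∀ (i k : Fin 5),
        ((i + k = (i - 1) - 2 ∨ i + k = i - 1 ∨ i + k = (i - 1) + 2) ↔ (k = 2 ∨ k = 4 ∨ k = 1)) := by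
      decide
    have X : ∀ k : Fin 5, G.Adj x (v (i + k)) ↔ (k = 2 ∨ k = 4 ∨ k = 1) :=
      fun k => (hx2 _).trans (tr i k)
    exact hchair (hasChair G (v (i + 3)) u (v (i + 1)) x (v (i + 0))
      ((U 3).2 (by decide)).symm ((U 1).2 (by decide)) ((X 1).2 (by decide)).symm
      ((E 1 0).2 (by decide))
      (fun hh => (((E 3 1).1 hh).2.elim (by decide) (by decide)))
      (fun hh => ((X 3).1 hh.symm).elim (by decide) (fun h' => h'.elim (by decide) (by decide)))
      (fun hh => (((E 3 0).1 hh).2.elim (by decide) (by decide)))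
      hadj
      (fun hh => ((U 0).1 hh) rfl)
      (fun hh => ((X 0).1 hh).elim (by decide) (fun h' => h'.elim (by decide) (by decide)))
      (fun heq => hx1 ⟨i + 0, heq.symm⟩))
  · -- S23(i+2) : X k ↔ k ∈ {0,2,4};  P5 : x w0 w1 u w3
    obtain ⟨hx1, hx2⟩ := hc
    have tr : ∀ (i k : Fin 5),
        ((i + k = (i + 2) - 2 ∨ i + k = i + 2 ∨ i + k = (i + 2) + 2) ↔ (k = 0 ∨ k = 2 ∨ k = 4)) := by
      decide
    have X : ∀ k : Fin 5, G.Adj x (v (i + k)) ↔ (k = 0 ∨ k = 2 ∨ k = 4) :=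
      fun k => (hx2 _).trans (tr i k)
    exact hP5 (hasP5 G x (v (i + 0)) (v (i + 1)) u (v (i + 3))
      ((X 0).2 (by decide)) ((E 0 1).2 (by decide)) ((U 1).2 (by decide)).symm
      ((U 3).2 (by decide))
      (fun hh => ((X 1).1 hh).elim (by decide) (fun h' => h'.elim (by decide) (by decide)))
      (fun hh => hadj hh.symm)
      (fun hh => ((X 3).1 hh).elim (by decide) (fun h' => h'.elim (by decide) (by decide)))
      (fun hh => ((U 0).1 hh.symm) rfl)
      (fun hh => (((E 0 3).1 hh).2.elim (by decide) (by decide)))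
      (fun hh => (((E 1 3).1 hh).2.elim (by decide) (by decide))))
  · -- S23(i-2) : X k ↔ k ∈ {0,1,3};  P5 : x w0 w4 u w2
    obtain ⟨hx1, hx2⟩ := hc
    have tr : ∀ (i k : Fin 5),
        ((i + k = (i - 2) - 2 ∨ i + k = i - 2 ∨ i + k = (i - 2) + 2) ↔ (k = 0 ∨ k = 1 ∨ k = 3)) := by
      decide
    have X : ∀ k : Fin 5, G.Adj x (v (i + k)) ↔ (k = 0 ∨ k = 1 ∨ k = 3) :=
      fun k => (hx2 _).trans (tr i k)
    exact hP5 (hasP5 G x (v (i + 0)) (v (i + 4)) u (v (i + 2))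
      ((X 0).2 (by decide)) ((E 0 4).2 (by decide)) ((U 4).2 (by decide)).symm
      ((U 2).2 (by decide))
      (fun hh => ((X 4).1 hh).elim (by decide) (fun h' => h'.elim (by decide) (by decide)))
      (fun hh => hadj hh.symm)
      (fun hh => ((X 2).1 hh).elim (by decide) (fun h' => h'.elim (by decide) (by decide)))
      (fun hh => ((U 0).1 hh.symm) rfl)
      (fun hh => (((E 0 2).1 hh).2.elim (by decide) (by decide)))
      (fun hh => (((E 4 2).1 hh).2.elim (by decide) (by decide))))
end

section
/- Let G be a chair-free graph containing an induced 5-cycle C = v1...v5. If u,v ∈ S₄(i) are nonadjacent and s ∈ S¹₃(i+1) ∪ S¹₃(i−1) ∪ S²₃(i) ∪ S₄(i+1) ∪ S₄(i−1) ∪ S₅, then s is adjacent to at least one of u, v. -/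
open SimpleGraph

/-!
A vertex `u ∈ S₄(i)` sees every `v j` with `j ≠ i`, in particular both `v (i + 2)` and
`v (i - 2)`, and misses `v i`. Each vertex `s` of the listed classes sees `v i` and one of
`v (i ± 2)`, say `v j`. If `s` missed both `u` and `w`, then `v i - s - v j` together with
the non-adjacent pair `u, w` hanging off `v j` would be an induced chair.
-/

lemma hasInducedCopy_chair_of_adj {V : Type*} {G : SimpleGraph V} {a b c d e : V}
    (hab : G.Adj a b) (hbc : G.Adj b c) (hcd : G.Adj c d) (hce : G.Adj c e)
    (hac : ¬ G.Adj a c) (had : ¬ G.Adj a d) (hae : ¬ G.Adj a e)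
    (hbd : ¬ G.Adj b d) (hbe : ¬ G.Adj b e) (hde : ¬ G.Adj d e) (hne : d ≠ e) :
    HasInducedCopy chair G := by
  have hadj : ∀ x y, G.Adj (![a, b, c, d, e] x) (![a, b, c, d, e] y) ↔ chair.Adj x y := by
    intro x y
    fin_cases x <;> fin_cases y <;>
      simp [chair, G.adj_comm, *]
  refine ⟨![a, b, c, d, e], ?_, hadj⟩
  have hac' : a ≠ c := fun h => had (h ▸ hcd)
  have had' : a ≠ d := fun h => hbd (h ▸ hab.symm)
  have hae' : a ≠ e := fun h => hbe (h ▸ hab.symm)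
  have hbd' : b ≠ d := fun h => had (h ▸ hab)
  have hbe' : b ≠ e := fun h => hae (h ▸ hab)
  intro x y hxy
  fin_cases x <;> fin_cases y <;>
    simp_all [hab.ne, hbc.ne, hcd.ne, hce.ne, eq_comm]

section FiveCycle

variable {V : Type*} {G : SimpleGraph V} {v : Fin 5 → V} {i : Fin 5}

lemma IsInducedC5.not_adj_of_two_apart (hC : IsInducedC5 G v) {j : Fin 5}
    (hj : j = i + 2 ∨ j = i - 2) : ¬ G.Adj (v i) (v j) := by
  rw [hC.2, cycle5, fromRel_adj]
  omega

lemma adj_of_mem_S4 {x : V} (hx : x ∈ S4 G v i) {j : Fin 5} (hj : j ≠ i) : G.Adj (v j) x :=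
  ((hx.2 j).2 hj).symm

lemma not_adj_of_mem_S4 {x : V} (hx : x ∈ S4 G v i) : ¬ G.Adj (v i) x :=
  fun h => (hx.2 i).1 h.symm rfl

lemma adj_and_exists_adj_two_apart_of_mem_union {s : V}
    (hs : s ∈ S13 G v (i + 1) ∪ S13 G v (i - 1) ∪ S23 G v i ∪ S4 G v (i + 1)
        ∪ S4 G v (i - 1) ∪ S5 G v) :
    G.Adj s (v i) ∧ ∃ j, (j = i + 2 ∨ j = i - 2) ∧ G.Adj s (v j) := by
  rcases hs with (((((⟨-, h⟩ | ⟨-, h⟩) | ⟨-, h⟩) | ⟨-, h⟩) | ⟨-, h⟩) | ⟨-, h⟩)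
  · exact ⟨(h i).2 (by omega), i + 2, .inl rfl, (h _).2 (by omega)⟩
  · exact ⟨(h i).2 (by omega), i - 2, .inr rfl, (h _).2 (by omega)⟩
  · exact ⟨(h i).2 (by omega), i + 2, .inl rfl, (h _).2 (by omega)⟩
  · exact ⟨(h i).2 (by omega), i + 2, .inl rfl, (h _).2 (by omega)⟩
  · exact ⟨(h i).2 (by omega), i + 2, .inl rfl, (h _).2 (by omega)⟩
  · exact ⟨h i, i + 2, .inl rfl, h _⟩

end FiveCycle

theorem stmt12_general {V : Type*} (G : SimpleGraph V)
    (hchair : ¬ HasInducedCopy chair G)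
    (v : Fin 5 → V) (hC : IsInducedC5 G v) (i : Fin 5)
    (u w : V) (hu : u ∈ S4 G v i) (hw : w ∈ S4 G v i)
    (hne : u ≠ w) (hnadj : ¬ G.Adj u w)
    (s : V)
    (hs : s ∈ S13 G v (i + 1) ∪ S13 G v (i - 1) ∪ S23 G v i ∪ S4 G v (i + 1)
        ∪ S4 G v (i - 1) ∪ S5 G v) :
    G.Adj s u ∨ G.Adj s w := by
  by_contra! hsuw
  obtain ⟨hsi, j, hj, hsj⟩ := adj_and_exists_adj_two_apart_of_mem_union hs
  have hji : j ≠ i := by omega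
  exact hchair <| hasInducedCopy_chair_of_adj hsi.symm hsj (adj_of_mem_S4 hu hji)
    (adj_of_mem_S4 hw hji) (hC.not_adj_of_two_apart hj) (not_adj_of_mem_S4 hu)
    (not_adj_of_mem_S4 hw) hsuw.1 hsuw.2 hnadj hne

theorem stmt12 {V : Type*} [Fintype V] (G : SimpleGraph V)
    (hchair : ¬ HasInducedCopy chair G)
    (v : Fin 5 → V) (hC : IsInducedC5 G v) (i : Fin 5)
    (u w : V) (hu : u ∈ S4 G v i) (hw : w ∈ S4 G v i)
    (hne : u ≠ w) (hnadj : ¬ G.Adj u w)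
    (s : V)
    (hs : s ∈ S13 G v (i + 1) ∪ S13 G v (i - 1) ∪ S23 G v i ∪ S4 G v (i + 1)
        ∪ S4 G v (i - 1) ∪ S5 G v) :
    G.Adj s u ∨ G.Adj s w :=
  stmt12_general G hchair v hC i u w hu hw hne hnadj s hs
end

section
/- Let G be a (P5, chair)-free graph containing an induced 5-cycle C = v1...v5. If x, y ∈ S₄(i) are nonadjacent, then every vertex of S₄(i+2) ∪ S₄(i−2) is adjacent to both x and y. -/
open SimpleGraph

lemma p5_of {V : Type*} (G : SimpleGraph V) (a b c d e : V)
    (hab : G.Adj a b) (hbc : G.Adj b c) (hcd : G.Adj c d) (hde : G.Adj d e)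
    (hac : ¬G.Adj a c) (had : ¬G.Adj a d) (hae : ¬G.Adj a e)
    (hbd : ¬G.Adj b d) (hbe : ¬G.Adj b e) (hce : ¬G.Adj c e)
    (nac : a ≠ c) (nad : a ≠ d) (nae : a ≠ e) (nbd : b ≠ d) (nbe : b ≠ e) (nce : c ≠ e) :
    HasInducedCopy (SimpleGraph.pathGraph 5) G := by
  have hca : ¬G.Adj c a := fun h => hac h.symm
  have hda : ¬G.Adj d a := fun h => had h.symm
  have hea : ¬G.Adj e a := fun h => hae h.symm
  have hdb : ¬G.Adj d b := fun h => hbd h.symm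
  have heb : ¬G.Adj e b := fun h => hbe h.symm
  have hec : ¬G.Adj e c := fun h => hce h.symm
  refine ⟨![a,b,c,d,e], ?_, ?_⟩
  · intro p q h
    fin_cases p <;> fin_cases q <;> simp_all [G.ne_of_adj hab, G.ne_of_adj hbc,
      G.ne_of_adj hcd, G.ne_of_adj hde, nac, nad, nae, nbd, nbe, nce,
      (G.ne_of_adj hab).symm, (G.ne_of_adj hbc).symm, (G.ne_of_adj hcd).symm,
      (G.ne_of_adj hde).symm, nac.symm, nad.symm, nae.symm, nbd.symm, nbe.symm, nce.symm]
  · intro p q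
    fin_cases p <;> fin_cases q <;>
      simp [SimpleGraph.pathGraph_adj, hab, hbc, hcd, hde, hab.symm, hbc.symm, hcd.symm,
        hde.symm, hac, had, hae, hbd, hbe, hce, hca, hda, hea, hdb, heb, hec] <;> decide

lemma chair_of {V : Type*} (G : SimpleGraph V) (a b c d e : V)
    (hab : G.Adj a b) (hbc : G.Adj b c) (hcd : G.Adj c d) (hce : G.Adj c e)
    (hac : ¬G.Adj a c) (had : ¬G.Adj a d) (hae : ¬G.Adj a e)
    (hbd : ¬G.Adj b d) (hbe : ¬G.Adj b e) (hde : ¬G.Adj d e)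
    (nac : a ≠ c) (nad : a ≠ d) (nae : a ≠ e) (nbd : b ≠ d) (nbe : b ≠ e) (nde : d ≠ e) :
    HasInducedCopy chair G := by
  have hca : ¬G.Adj c a := fun h => hac h.symm
  have hda : ¬G.Adj d a := fun h => had h.symm
  have hea : ¬G.Adj e a := fun h => hae h.symm
  have hdb : ¬G.Adj d b := fun h => hbd h.symm
  have heb : ¬G.Adj e b := fun h => hbe h.symm
  have hed : ¬G.Adj e d := fun h => hde h.symm
  refine ⟨![a,b,c,d,e], ?_, ?_⟩
  · intro p q h
    fin_cases p <;> fin_cases q <;> simp_all [G.ne_of_adj hab, G.ne_of_adj hbc,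
      G.ne_of_adj hcd, G.ne_of_adj hce, nac, nad, nae, nbd, nbe, nde,
      (G.ne_of_adj hab).symm, (G.ne_of_adj hbc).symm, (G.ne_of_adj hcd).symm,
      (G.ne_of_adj hce).symm, nac.symm, nad.symm, nae.symm, nbd.symm, nbe.symm, nde.symm]
  · intro p q
    fin_cases p <;> fin_cases q <;>
      simp [chair, hab, hbc, hcd, hce, hab.symm, hbc.symm, hcd.symm,
        hce.symm, hac, had, hae, hbd, hbe, hde, hca, hda, hea, hdb, heb, hed] <;> decide

lemma cyc_ne2 : ∀ m : Fin 5, ¬ cycle5.Adj m (m + 2) := by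
  intro m; rw [cycle5, SimpleGraph.fromRel_adj]; revert m; decide

lemma cyc_ne2' : ∀ m : Fin 5, ¬ cycle5.Adj m (m - 2) := by
  intro m; rw [cycle5, SimpleGraph.fromRel_adj]; revert m; decide

lemma keyA {V : Type*} (G : SimpleGraph V)
    (hP5 : ¬ HasInducedCopy (SimpleGraph.pathGraph 5) G)
    (hchair : ¬ HasInducedCopy chair G)
    (v : Fin 5 → V) (hC : IsInducedC5 G v) (i : Fin 5)
    (x y : V) (hx : x ∈ S4 G v i) (hy : y ∈ S4 G v i)
    (hne : x ≠ y) (hnadj : ¬ G.Adj x y)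
    (z : V) (hz : z ∈ S4 G v (i + 2)) : G.Adj z x := by
  obtain ⟨hxr, hxa⟩ := hx
  obtain ⟨hyr, hya⟩ := hy
  obtain ⟨hzr, hza⟩ := hz
  by_contra hzx
  have e1 : i ≠ i + 2 := (by decide : ∀ m : Fin 5, m ≠ m + 2) i
  have e2 : i + 2 ≠ i := (by decide : ∀ m : Fin 5, m + 2 ≠ m) i
  have e3 : i - 2 ≠ i + 2 := (by decide : ∀ m : Fin 5, m - 2 ≠ m + 2) i
  have e4 : i - 2 ≠ i := (by decide : ∀ m : Fin 5, m - 2 ≠ m) i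
  have e5 : i ≠ i - 2 := (by decide : ∀ m : Fin 5, m ≠ m - 2) i
  have axvi2 : G.Adj x (v (i + 2)) := (hxa (i + 2)).2 e2
  have axvi2' : G.Adj x (v (i - 2)) := (hxa (i - 2)).2 e4
  have ayvi2 : G.Adj y (v (i + 2)) := (hya (i + 2)).2 e2
  have ayvi2' : G.Adj y (v (i - 2)) := (hya (i - 2)).2 e4
  have azvi : G.Adj z (v i) := (hza i).2 e1
  have azvi2' : G.Adj z (v (i - 2)) := (hza (i - 2)).2 e3
  have nzvi2 : ¬ G.Adj z (v (i + 2)) := fun h => (hza (i + 2)).1 h rfl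
  have nxvi : ¬ G.Adj x (v i) := fun h => (hxa i).1 h rfl
  have nyvi : ¬ G.Adj y (v i) := fun h => (hya i).1 h rfl
  have nvv : ¬ G.Adj (v i) (v (i + 2)) := fun h => cyc_ne2 i ((hC.2 i (i + 2)).1 h)
  have nvv' : ¬ G.Adj (v i) (v (i - 2)) := fun h => cyc_ne2' i ((hC.2 i (i - 2)).1 h)
  have nzx : z ≠ x := fun h => nzvi2 (h ▸ axvi2)
  have nzy : z ≠ y := fun h => nzvi2 (h ▸ ayvi2)
  have nxv : ∀ j, x ≠ v j := fun j h => hxr ⟨j, h.symm⟩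
  have nyv : ∀ j, y ≠ v j := fun j h => hyr ⟨j, h.symm⟩
  have nzv : ∀ j, z ≠ v j := fun j h => hzr ⟨j, h.symm⟩
  have nvi : v i ≠ v (i + 2) := fun h => e1 (hC.1 h)
  have nvi' : v i ≠ v (i - 2) := fun h => e5 (hC.1 h)
  by_cases hzy : G.Adj z y
  · -- induced P5 : v i - z - y - v(i+2) - x
    exact hP5 (p5_of G (v i) z y (v (i + 2)) x azvi.symm hzy ayvi2 axvi2.symm
      (fun h => nyvi h.symm) nvv (fun h => nxvi h.symm) nzvi2 hzx
      (fun h => hnadj h.symm)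
      (nyv i).symm nvi ((nxv i).symm) (nzv (i + 2)) nzx hne.symm)
  · -- chair : path (v i) - z - v(i-2) - x with y adjacent to v(i-2)
    exact hchair (chair_of G (v i) z (v (i - 2)) x y azvi.symm azvi2' axvi2'.symm ayvi2'.symm
      nvv' (fun h => nxvi h.symm) (fun h => nyvi h.symm) hzx hzy hnadj
      nvi' ((nxv i).symm) ((nyv i).symm) nzx nzy hne)

lemma keyB {V : Type*} (G : SimpleGraph V)
    (hP5 : ¬ HasInducedCopy (SimpleGraph.pathGraph 5) G)
    (hchair : ¬ HasInducedCopy chair G)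
    (v : Fin 5 → V) (hC : IsInducedC5 G v) (i : Fin 5)
    (x y : V) (hx : x ∈ S4 G v i) (hy : y ∈ S4 G v i)
    (hne : x ≠ y) (hnadj : ¬ G.Adj x y)
    (z : V) (hz : z ∈ S4 G v (i - 2)) : G.Adj z x := by
  obtain ⟨hxr, hxa⟩ := hx
  obtain ⟨hyr, hya⟩ := hy
  obtain ⟨hzr, hza⟩ := hz
  by_contra hzx
  have e1 : i ≠ i - 2 := (by decide : ∀ m : Fin 5, m ≠ m - 2) i
  have e2 : i - 2 ≠ i := (by decide : ∀ m : Fin 5, m - 2 ≠ m) i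
  have e3 : i + 2 ≠ i - 2 := (by decide : ∀ m : Fin 5, m + 2 ≠ m - 2) i
  have e4 : i + 2 ≠ i := (by decide : ∀ m : Fin 5, m + 2 ≠ m) i
  have e5 : i ≠ i + 2 := (by decide : ∀ m : Fin 5, m ≠ m + 2) i
  have axvi2 : G.Adj x (v (i - 2)) := (hxa (i - 2)).2 e2
  have axvi2' : G.Adj x (v (i + 2)) := (hxa (i + 2)).2 e4
  have ayvi2 : G.Adj y (v (i - 2)) := (hya (i - 2)).2 e2
  have ayvi2' : G.Adj y (v (i + 2)) := (hya (i + 2)).2 e4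
  have azvi : G.Adj z (v i) := (hza i).2 e1
  have azvi2' : G.Adj z (v (i + 2)) := (hza (i + 2)).2 e3
  have nzvi2 : ¬ G.Adj z (v (i - 2)) := fun h => (hza (i - 2)).1 h rfl
  have nxvi : ¬ G.Adj x (v i) := fun h => (hxa i).1 h rfl
  have nyvi : ¬ G.Adj y (v i) := fun h => (hya i).1 h rfl
  have nvv : ¬ G.Adj (v i) (v (i - 2)) := fun h => cyc_ne2' i ((hC.2 i (i - 2)).1 h)
  have nvv' : ¬ G.Adj (v i) (v (i + 2)) := fun h => cyc_ne2 i ((hC.2 i (i + 2)).1 h)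
  have nzx : z ≠ x := fun h => nzvi2 (h ▸ axvi2)
  have nzy : z ≠ y := fun h => nzvi2 (h ▸ ayvi2)
  have nxv : ∀ j, x ≠ v j := fun j h => hxr ⟨j, h.symm⟩
  have nyv : ∀ j, y ≠ v j := fun j h => hyr ⟨j, h.symm⟩
  have nzv : ∀ j, z ≠ v j := fun j h => hzr ⟨j, h.symm⟩
  have nvi : v i ≠ v (i - 2) := fun h => e1 (hC.1 h)
  have nvi' : v i ≠ v (i + 2) := fun h => e5 (hC.1 h)
  by_cases hzy : G.Adj z y
  · -- induced P5 : v i - z - y - v(i-2) - x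
    exact hP5 (p5_of G (v i) z y (v (i - 2)) x azvi.symm hzy ayvi2 axvi2.symm
      (fun h => nyvi h.symm) nvv (fun h => nxvi h.symm) nzvi2 hzx
      (fun h => hnadj h.symm)
      (nyv i).symm nvi ((nxv i).symm) (nzv (i - 2)) nzx hne.symm)
  · -- chair : path (v i) - z - v(i+2) - x with y adjacent to v(i+2)
    exact hchair (chair_of G (v i) z (v (i + 2)) x y azvi.symm azvi2' axvi2'.symm ayvi2'.symm
      nvv' (fun h => nxvi h.symm) (fun h => nyvi h.symm) hzx hzy hnadj
      nvi' ((nxv i).symm) ((nyv i).symm) nzx nzy hne)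

theorem stmt13 {V : Type*} [Fintype V] (G : SimpleGraph V)
    (hP5 : ¬ HasInducedCopy (SimpleGraph.pathGraph 5) G)
    (hchair : ¬ HasInducedCopy chair G)
    (v : Fin 5 → V) (hC : IsInducedC5 G v) (i : Fin 5)
    (x y : V) (hx : x ∈ S4 G v i) (hy : y ∈ S4 G v i)
    (hne : x ≠ y) (hnadj : ¬ G.Adj x y)
    (z : V) (hz : z ∈ S4 G v (i + 2) ∪ S4 G v (i - 2)) :
    G.Adj z x ∧ G.Adj z y := by
  have hnadj' : ¬ G.Adj y x := fun h => hnadj h.symm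
  rcases hz with hz | hz
  · exact ⟨keyA G hP5 hchair v hC i x y hx hy hne hnadj z hz,
      keyA G hP5 hchair v hC i y x hy hx hne.symm hnadj' z hz⟩
  · exact ⟨keyB G hP5 hchair v hC i x y hx hy hne hnadj z hz,
      keyB G hP5 hchair v hC i y x hy hx hne.symm hnadj' z hz⟩
end

section
/- Let G be a chair-free 5-vertex-critical K5-free graph containing an induced 5-cycle C = v1...v5. Then for each i, |S¹₃(i)| ≤ 2, where S¹₃(i) is the set of vertices outside C with neighborhood on C equal to {v_{i−1}, v_i, v_{i+1}}. -/
open SimpleGraph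

set_option maxHeartbeats 1000000 in
theorem stmt14 {V : Type*} [Fintype V] (G : SimpleGraph V)
    (hcrit : IsVertexCritical G 5)
    (hK5 : G.CliqueFree 5)
    (hchair : ¬ HasInducedCopy chair G)
    (v : Fin 5 → V) (hC : IsInducedC5 G v) (i : Fin 5) :
    (S13 G v i).ncard ≤ 2 := by
  classical
  obtain ⟨hvinj, hv⟩ := hC
  have c1 : ∀ k : Fin 5, cycle5.Adj (k+2) (k-2) := by
    simp only [cycle5, fromRel_adj]; decide
  have c2 : ∀ k : Fin 5, cycle5.Adj (k-2) (k-1) := by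
    simp only [cycle5, fromRel_adj]; decide
  have c3 : ∀ k : Fin 5, cycle5.Adj k (k+1) := by
    simp only [cycle5, fromRel_adj]; decide
  have c4 : ∀ k : Fin 5, ¬ cycle5.Adj (k+2) (k-1) := by
    simp only [cycle5, fromRel_adj]; decide
  have d1 : ∀ k : Fin 5, ¬(k+2 = k-1 ∨ k+2 = k ∨ k+2 = k+1) := by decide
  have d2 : ∀ k : Fin 5, ¬(k-2 = k-1 ∨ k-2 = k ∨ k-2 = k+1) := by decide
  have hclique : ∀ x ∈ S13 G v i, ∀ y ∈ S13 G v i, x ≠ y → G.Adj x y := by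
    intro x hx y hy hxy
    by_contra hadj
    have hxm1 : G.Adj x (v (i-1)) := (hx.2 (i-1)).2 (Or.inl rfl)
    have hym1 : G.Adj y (v (i-1)) := (hy.2 (i-1)).2 (Or.inl rfl)
    have hxp2 : ¬ G.Adj x (v (i+2)) := fun h => d1 i ((hx.2 (i+2)).1 h)
    have hyp2 : ¬ G.Adj y (v (i+2)) := fun h => d1 i ((hy.2 (i+2)).1 h)
    have hxm2 : ¬ G.Adj x (v (i-2)) := fun h => d2 i ((hx.2 (i-2)).1 h)
    have hym2 : ¬ G.Adj y (v (i-2)) := fun h => d2 i ((hy.2 (i-2)).1 h)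
    have hA01 : G.Adj (v (i+2)) (v (i-2)) := (hv _ _).2 (c1 i)
    have hA12 : G.Adj (v (i-2)) (v (i-1)) := (hv _ _).2 (c2 i)
    have hN02 : ¬ G.Adj (v (i+2)) (v (i-1)) := fun h => c4 i ((hv _ _).1 h)
    have dx : ∀ j, x ≠ v j := fun j h => hx.1 ⟨j, h.symm⟩
    have dy : ∀ j, y ≠ v j := fun j h => hy.1 ⟨j, h.symm⟩
    have e1 : v (i+2) ≠ v (i-2) := fun h => (by decide : ∀ k : Fin 5, k+2 ≠ k-2) i (hvinj h)
    have e2 : v (i+2) ≠ v (i-1) := fun h => (by decide : ∀ k : Fin 5, k+2 ≠ k-1) i (hvinj h)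
    have e3 : v (i-2) ≠ v (i-1) := fun h => (by decide : ∀ k : Fin 5, k-2 ≠ k-1) i (hvinj h)
    apply hchair
    refine ⟨![v (i+2), v (i-2), v (i-1), x, y], ?_, ?_⟩
    · intro a b hab
      have hx2 := dx (i+2); have hxm2' := dx (i-2); have hxm1' := dx (i-1)
      have hy2 := dy (i+2); have hym2' := dy (i-2); have hym1' := dy (i-1)
      fin_cases a <;> fin_cases b <;>
        first
          | rfl
          | (simp only [Matrix.cons_val_zero, Matrix.cons_val_one, Matrix.head_cons,
              Matrix.cons_val_two, Matrix.tail_cons, Matrix.cons_val_three,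
              Matrix.cons_val_four] at hab ;
             first | exact absurd hab (by tauto) | exact absurd hab.symm (by tauto))
    · intro a b
      fin_cases a <;> fin_cases b <;> simp [chair] <;>
        first
          | exact hA01 | exact hA01.symm | exact hA12 | exact hA12.symm
          | exact hxm1.symm | exact hym1.symm | exact hxm1 | exact hym1
          | exact hN02 | exact fun h => hN02 h.symm
          | exact hxp2 | exact fun h => hxp2 h.symm
          | exact hyp2 | exact fun h => hyp2 h.symm
          | exact hxm2 | exact fun h => hxm2 h.symm
          | exact hym2 | exact fun h => hym2 h.symm
          | exact hadj | exact fun h => hadj h.symm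
  by_contra hle
  push_neg at hle
  obtain ⟨t, hts, ht3⟩ := Set.exists_subset_card_eq hle
  rw [Set.ncard_eq_three] at ht3
  obtain ⟨x, y, z, hxy, hxz, hyz, rfl⟩ := ht3
  have hx : x ∈ S13 G v i := hts (by simp)
  have hy : y ∈ S13 G v i := hts (by simp)
  have hz : z ∈ S13 G v i := hts (by simp)
  have dx : ∀ j, x ≠ v j := fun j h => hx.1 ⟨j, h.symm⟩
  have dy : ∀ j, y ≠ v j := fun j h => hy.1 ⟨j, h.symm⟩
  have dz : ∀ j, z ≠ v j := fun j h => hz.1 ⟨j, h.symm⟩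
  have hvv : G.Adj (v i) (v (i+1)) := (hv _ _).2 (c3 i)
  have e : v i ≠ v (i+1) := fun h => (by decide : ∀ k : Fin 5, k ≠ k+1) i (hvinj h)
  have axi : ∀ w ∈ S13 G v i, G.Adj w (v i) := fun w hw => (hw.2 i).2 (Or.inr (Or.inl rfl))
  have axi1 : ∀ w ∈ S13 G v i, G.Adj w (v (i+1)) :=
    fun w hw => (hw.2 (i+1)).2 (Or.inr (Or.inr rfl))
  apply hK5 {x, y, z, v i, v (i+1)}
  constructor
  · intro a ha b hb hab
    simp only [Finset.coe_insert, Set.mem_insert_iff, Finset.coe_singleton,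
      Set.mem_singleton_iff] at ha hb
    rcases ha with rfl|rfl|rfl|rfl|rfl <;> rcases hb with rfl|rfl|rfl|rfl|rfl <;>
      first
        | exact absurd rfl hab
        | exact hclique _ ‹_› _ ‹_› ‹_›
        | exact (hclique _ ‹_› _ ‹_› (Ne.symm ‹_›)).symm
        | exact axi _ ‹_›
        | exact (axi _ ‹_›).symm
        | exact axi1 _ ‹_›
        | exact (axi1 _ ‹_›).symm
        | exact hvv | exact hvv.symm
  · have n1 : x ≠ v i := dx i
    have n2 : y ≠ v i := dy i
    have n3 : z ≠ v i := dz i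
    have n4 : x ≠ v (i+1) := dx (i+1)
    have n5 : y ≠ v (i+1) := dy (i+1)
    have n6 : z ≠ v (i+1) := dz (i+1)
    rw [Finset.card_insert_of_notMem (by simp [hxy, hxz, n1, n4]),
      Finset.card_insert_of_notMem (by simp [hyz, n2, n5]),
      Finset.card_insert_of_notMem (by simp [n3, n6]),
      Finset.card_insert_of_notMem (by simp [e]),
      Finset.card_singleton]
end

section
/- Let G be a 5-vertex-critical graph containing an induced 5-cycle C = v1...v5. Then for each i, the induced subgraph on S²₃(i) ∪ S₄(i) ∪ S₅ is 2-colorable. -/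
open SimpleGraph

lemma stmt15_card_aux : ∀ a b : Fin 4, a ≠ b → Fintype.card {c : Fin 4 // c ≠ a ∧ c ≠ b} ≤ 2 := by
  decide

theorem stmt15 {V : Type*} [Fintype V] (G : SimpleGraph V)
    (hcrit : IsVertexCritical G 5)
    (v : Fin 5 → V) (hC : IsInducedC5 G v) (i : Fin 5) :
    (G.induce (S23 G v i ∪ S4 G v i ∪ S5 G v)).Colorable 2 := by
  obtain ⟨hinj, hadj⟩ := hC
  have d1 : ∀ k : Fin 5, k - 2 ≠ k + 1 := by decide
  have d2 : ∀ k : Fin 5, k + 2 ≠ k + 1 := by decide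
  have d3 : ∀ k : Fin 5, cycle5.Adj (k - 2) (k + 2) := by
    simp only [cycle5, fromRel_adj]; decide
  have d4 : ∀ k : Fin 5, k - 2 ≠ k := by decide
  have d5 : ∀ k : Fin 5, k + 2 ≠ k := by decide
  have h4 : (G.induce {v (i+1)}ᶜ).Colorable 4 := by
    rw [← chromaticNumber_le_iff_colorable]
    have := hcrit.2 (v (i+1))
    exact Order.le_of_lt_add_one (by exact_mod_cast this)
  obtain ⟨C⟩ := h4
  have hm : v (i-2) ∈ ({v (i+1)}ᶜ : Set V) := fun h => d1 i (hinj h)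
  have hp : v (i+2) ∈ ({v (i+1)}ᶜ : Set V) := fun h => d2 i (hinj h)
  have hmp : G.Adj (v (i-2)) (v (i+2)) := (hadj _ _).mpr (d3 i)
  set a := C ⟨v (i-2), hm⟩ with ha
  set b := C ⟨v (i+2), hp⟩ with hb
  have hab : a ≠ b := C.valid hmp
  -- every vertex of the union is adjacent to v(i-2) and v(i+2), and not in range v
  have hkey : ∀ x ∈ S23 G v i ∪ S4 G v i ∪ S5 G v,
      x ∉ Set.range v ∧ G.Adj x (v (i-2)) ∧ G.Adj x (v (i+2)) := by
    rintro x (((⟨hr, hx⟩ | ⟨hr, hx⟩) | ⟨hr, hx⟩))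
    · exact ⟨hr, (hx _).mpr (Or.inl rfl), (hx _).mpr (Or.inr (Or.inr rfl))⟩
    · exact ⟨hr, (hx _).mpr (d4 i), (hx _).mpr (d5 i)⟩
    · exact ⟨hr, hx _, hx _⟩
  have hmem : ∀ x ∈ S23 G v i ∪ S4 G v i ∪ S5 G v, x ∈ ({v (i+1)}ᶜ : Set V) :=
    fun x hx h => (hkey x hx).1 ⟨i+1, h.symm⟩
  -- build the coloring into the subtype of remaining colors
  let T := S23 G v i ∪ S4 G v i ∪ S5 G v
  let col : (G.induce T).Coloring {c : Fin 4 // c ≠ a ∧ c ≠ b} :=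
    Coloring.mk
      (fun x => ⟨C ⟨x.1, hmem x.1 x.2⟩,
        C.valid (show (G.induce ({v (i+1)}ᶜ : Set V)).Adj ⟨x.1, _⟩ ⟨v (i-2), hm⟩ from
          (hkey x.1 x.2).2.1),
        C.valid (show (G.induce ({v (i+1)}ᶜ : Set V)).Adj ⟨x.1, _⟩ ⟨v (i+2), hp⟩ from
          (hkey x.1 x.2).2.2)⟩)
      (by
        intro x y hxy
        simp only [Subtype.mk.injEq, ne_eq, Subtype.ext_iff]
        exact C.valid (show (G.induce ({v (i+1)}ᶜ : Set V)).Adj ⟨x.1, _⟩ ⟨y.1, _⟩ from hxy))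
  exact col.colorable.mono (stmt15_card_aux a b hab)
end

section
/- Every connected triangle-free P5-free graph is bipartite or contains an induced 5-cycle; consequently, a connected triangle-free, P5-free, C5-free graph is bipartite (2-colorable). -/
open SimpleGraph

section AuxWalks

variable {V : Type*} (G : SimpleGraph V)

/-- A walk of length `n` from `a` to `b`, encoded as a function. -/
def FW (a b : V) (n : ℕ) : Prop :=
  ∃ f : ℕ → V, f 0 = a ∧ f n = b ∧ ∀ i < n, G.Adj (f i) (f (i + 1))

variable {G}

lemma FW_single {a b : V} (h : G.Adj a b) : FW G a b 1 := by
  refine ⟨fun k => if k = 0 then a else b, by simp, by simp, ?_⟩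
  intro i hi
  interval_cases i
  simpa using h

lemma FW_trans {a b c : V} {m l : ℕ} (h1 : FW G a b m) (h2 : FW G b c l) :
    FW G a c (m + l) := by
  obtain ⟨f, hf0, hfm, hf⟩ := h1
  obtain ⟨g, hg0, hgl, hg⟩ := h2
  refine ⟨fun k => if k < m then f k else g (k - m), ?_, ?_, ?_⟩
  · by_cases h : 0 < m
    · simpa [h] using hf0
    · have hm : m = 0 := by omega
      subst hm
      simp only [Nat.lt_irrefl, if_neg, Nat.sub_zero]
      rw [hg0, ← hfm, hf0]
      simp
  · have : ¬ m + l < m := by omega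
    simp only [this, if_neg, Nat.add_sub_cancel_left]
    exact hgl
  · intro i hi
    by_cases h1' : i + 1 < m
    · have : i < m := by omega
      simp only [this, h1', if_pos]
      exact hf i this
    · by_cases h2' : i < m
      · have hm : i + 1 = m := by omega
        simp only [h2', if_pos, h1', if_neg]
        have : g (i + 1 - m) = f (i + 1) := by
          rw [hm]; simp [hg0, ← hfm]
        rw [this]
        exact hf i h2'
      · have hn1 : ¬ i + 1 < m := by omega
        simp only [h2', hn1, if_neg]
        have he : i + 1 - m = (i - m) + 1 := by omega
        rw [he]
        exact hg (i - m) (by omega)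

lemma FW_symm {a b : V} {n : ℕ} (h : FW G a b n) : FW G b a n := by
  obtain ⟨f, hf0, hfn, hf⟩ := h
  refine ⟨fun k => f (n - k), by simpa, by simpa, ?_⟩
  intro i hi
  show G.Adj (f (n - i)) (f (n - (i + 1)))
  have he : n - i = (n - (i + 1)) + 1 := by omega
  rw [he]
  exact (hf (n - (i + 1)) (by omega)).symm

lemma FW_segment {f : ℕ → V} {n : ℕ} (hadj : ∀ i < n, G.Adj (f i) (f (i + 1)))
    {i j : ℕ} (hij : i ≤ j) (hjn : j ≤ n) : FW G (f i) (f j) (j - i) := by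
  refine ⟨fun k => f (i + k), by simp, ?_, ?_⟩
  · show f (i + (j - i)) = f j
    congr 1; omega
  · intro k hk
    show G.Adj (f (i + k)) (f (i + (k + 1)))
    have he : i + (k + 1) = (i + k) + 1 := by omega
    rw [he]
    exact hadj (i + k) (by omega)

lemma FW_congr_len {a b : V} {m n : ℕ} (h : m = n) : FW G a b m → FW G a b n := by
  rw [h]; exact id

lemma FW_of_walk {a b : V} (w : G.Walk a b) : FW G a b w.length :=
  ⟨w.getVert, w.getVert_zero, w.getVert_length, fun i hi => w.adj_getVert_succ hi⟩

end AuxWalks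

lemma colorable_of_no_odd {V : Type*} {G : SimpleGraph V} (hconn : G.Connected)
    (hno : ¬ ∃ (a : V) (n : ℕ), Odd n ∧ FW G a a n) : G.Colorable 2 := by
  classical
  have hne : Nonempty V := hconn.nonempty
  let r : V := Classical.arbitrary V
  have hw : ∀ x : V, ∃ n, FW G r x n := fun x => by
    obtain ⟨w⟩ := hconn.preconnected r x
    exact ⟨w.length, FW_of_walk w⟩
  refine ⟨SimpleGraph.Coloring.mk (fun x => ⟨Nat.find (hw x) % 2, by omega⟩) ?_⟩
  intro x y hadj hc
  apply hno
  have h1 : FW G r x (Nat.find (hw x)) := Nat.find_spec (hw x)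
  have h2 : FW G r y (Nat.find (hw y)) := Nat.find_spec (hw y)
  refine ⟨r, Nat.find (hw x) + (1 + Nat.find (hw y)), ?_, ?_⟩
  · have hceq : Nat.find (hw x) % 2 = Nat.find (hw y) % 2 := by
      simpa [Fin.ext_iff] using hc
    rw [Nat.odd_iff]; omega
  · exact FW_trans h1 (FW_trans (FW_single hadj) (FW_symm h2))

lemma inducedC5_of_odd {V : Type*} {G : SimpleGraph V} (htri : G.CliqueFree 3)
    (hP5 : ¬ HasInducedCopy (SimpleGraph.pathGraph 5) G)
    (hodd : ∃ (a : V) (n : ℕ), Odd n ∧ FW G a a n) : HasInducedCopy cycle5 G := by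
  classical
  have hex : ∃ n, Odd n ∧ ∃ a : V, FW G a a n := by
    obtain ⟨a, n, h1, h2⟩ := hodd; exact ⟨n, h1, a, h2⟩
  set n := Nat.find hex with hndef
  obtain ⟨hoddn, a, hfw⟩ := Nat.find_spec hex
  obtain ⟨f, hf0, hfn, hadj⟩ := hfw
  have hmin : ∀ m, m < n → ¬(Odd m ∧ ∃ a : V, FW G a a m) := fun m hm => Nat.find_min hex hm
  have hodd2 : n % 2 = 1 := Nat.odd_iff.mp hoddn
  have hfn0 : f n = f 0 := by rw [hf0, hfn]
  have hne1 : n ≠ 1 := by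
    rintro h1
    have := hadj 0 (by omega)
    have e : f 1 = f 0 := by rw [← h1]; exact hfn0
    rw [e] at this
    exact G.irrefl this
  have h3 : 3 ≤ n := by omega
  -- Claim A: equal vertices only at the two endpoints
  have claimA : ∀ i j, i ≤ j → j ≤ n → f i = f j → i = j ∨ (i = 0 ∧ j = n) := by
    intro i j hij hjn heq
    by_contra hcon
    have hnij : i ≠ j := fun h => hcon (Or.inl h)
    have hb : j - i < n := by
      by_contra hb
      push_neg at hb
      exact hcon (Or.inr ⟨by omega, by omega⟩)
    have w1 : FW G (f i) (f i) (j - i) := by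
      have := FW_segment hadj hij hjn
      rwa [← heq] at this
    have w2 : FW G (f i) (f i) (n - (j - i)) := by
      have s1 : FW G (f j) (f 0) (n - j) := by
        have := FW_segment hadj hjn (le_refl n)
        rwa [hfn0] at this
      have s2 : FW G (f 0) (f i) (i - 0) := FW_segment hadj (Nat.zero_le i) (le_trans hij hjn)
      have h12 := FW_trans s1 s2
      rw [← heq] at h12
      exact FW_congr_len (by omega) h12
    have hor : Odd (j - i) ∨ Odd (n - (j - i)) := by
      rw [Nat.odd_iff, Nat.odd_iff]; omega
    rcases hor with h | h
    · exact hmin (j - i) (by omega) ⟨h, f i, w1⟩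
    · exact hmin (n - (j - i)) (by omega) ⟨h, f i, w2⟩
  -- Claim B: adjacency only between consecutive vertices
  have claimB : ∀ i j, i ≤ j → j ≤ n → G.Adj (f i) (f j) → j = i + 1 ∨ j = i + (n - 1) := by
    intro i j hij hjn hA
    have hne : f i ≠ f j := hA.ne
    have hij' : i < j := lt_of_le_of_ne hij (fun h => hne (by rw [h]))
    have hb : j - i < n := by
      by_contra hb
      push_neg at hb
      have hi0 : i = 0 := by omega
      have hjn' : j = n := by omega
      rw [hi0, hjn'] at hne
      exact hne hfn0.symm
    by_contra hcon
    push_neg at hcon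
    obtain ⟨hc1, hc2⟩ := hcon
    have w1 : FW G (f i) (f i) ((j - i) + 1) :=
      FW_trans (FW_segment hadj hij hjn) (FW_single hA.symm)
    have w2 : FW G (f j) (f j) ((n - (j - i)) + 1) := by
      have s1 : FW G (f j) (f 0) (n - j) := by
        have := FW_segment hadj hjn (le_refl n)
        rwa [hfn0] at this
      have s2 : FW G (f 0) (f i) (i - 0) := FW_segment hadj (Nat.zero_le i) (le_trans hij hjn)
      have h12 := FW_trans (FW_trans s1 s2) (FW_single hA)
      exact FW_congr_len (by omega) h12
    have hor : Odd ((j - i) + 1) ∨ Odd ((n - (j - i)) + 1) := by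
      rw [Nat.odd_iff, Nat.odd_iff]; omega
    rcases hor with h | h
    · have hge : ¬ ((j - i) + 1 < n) := fun hlt => hmin _ hlt ⟨h, f i, w1⟩
      omega
    · have hge : ¬ ((n - (j - i)) + 1 < n) := fun hlt => hmin _ hlt ⟨h, f j, w2⟩
      omega
  have hcases : n = 3 ∨ n = 5 ∨ 7 ≤ n := by omega
  rcases hcases with h3' | h5 | h7
  · -- triangle, contradiction
    exfalso
    have e3 : f 3 = f 0 := by rw [← h3']; exact hfn0
    have a01 : G.Adj (f 0) (f 1) := hadj 0 (by omega)
    have a12 : G.Adj (f 1) (f 2) := hadj 1 (by omega)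
    have a02 : G.Adj (f 0) (f 2) := by
      have := hadj 2 (by omega)
      rw [e3] at this
      exact this.symm
    exact htri _ (SimpleGraph.is3Clique_triple_iff.mpr ⟨a01, a02, a12⟩)
  · -- induced C5
    have e5 : f 5 = f 0 := by rw [← h5]; exact hfn0
    refine ⟨fun k => f k.val, ?_, ?_⟩
    · intro i j hij
      have hi := i.isLt
      have hj := j.isLt
      rcases le_total i.val j.val with h | h
      · rcases claimA i.val j.val h (by omega) hij with he | ⟨h0, hn'⟩
        · exact Fin.ext he
        · omega
      · rcases claimA j.val i.val h (by omega) hij.symm with he | ⟨h0, hn'⟩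
        · exact Fin.ext he.symm
        · omega
    · have hc5 : ∀ x y : Fin 5, cycle5.Adj x y ↔
          ((x.val + 1) % 5 = y.val ∨ (y.val + 1) % 5 = x.val) := by
        intro x y
        have hx := x.isLt
        have hy := y.isLt
        rw [show cycle5 = SimpleGraph.fromRel (fun a b => b = a + 1) from rfl,
          SimpleGraph.fromRel_adj]
        simp only [Fin.ext_iff, Fin.val_add, Fin.val_one, ne_eq]
        omega
      intro x y
      rw [hc5]
      have hx := x.isLt
      have hy := y.isLt
      constructor
      · intro hA
        rcases le_total x.val y.val with h | h
        · rcases claimB x.val y.val h (by omega) hA with h1 | h1 <;> omega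
        · rcases claimB y.val x.val h (by omega) hA.symm with h1 | h1 <;> omega
      · rintro (h1 | h1)
        · by_cases hx4 : x.val = 4
          · have hA : G.Adj (f 4) (f 5) := hadj 4 (by omega)
            rw [e5] at hA
            have ey : y.val = 0 := by omega
            show G.Adj (f x.val) (f y.val)
            rw [hx4, ey]
            exact hA
          · have hlt : x.val + 1 = y.val := by omega
            have hA := hadj x.val (by omega)
            rwa [hlt] at hA
        · by_cases hy4 : y.val = 4
          · have hA : G.Adj (f 4) (f 5) := hadj 4 (by omega)
            rw [e5] at hA
            have ex : x.val = 0 := by omega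
            show G.Adj (f x.val) (f y.val)
            rw [hy4, ex]
            exact hA.symm
          · have hlt : y.val + 1 = x.val := by omega
            have hA := hadj y.val (by omega)
            rw [hlt] at hA
            exact hA.symm
  · -- induced P5, contradiction
    exfalso
    apply hP5
    refine ⟨fun k => f k.val, ?_, ?_⟩
    · intro i j hij
      have hi := i.isLt
      have hj := j.isLt
      rcases le_total i.val j.val with h | h
      · rcases claimA i.val j.val h (by omega) hij with he | ⟨h0, hn'⟩
        · exact Fin.ext he
        · omega
      · rcases claimA j.val i.val h (by omega) hij.symm with he | ⟨h0, hn'⟩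
        · exact Fin.ext he.symm
        · omega
    · intro x y
      rw [SimpleGraph.pathGraph_adj]
      have hx := x.isLt
      have hy := y.isLt
      constructor
      · intro hA
        rcases le_total x.val y.val with h | h
        · rcases claimB x.val y.val h (by omega) hA with h1 | h1
          · left; omega
          · exfalso; omega
        · rcases claimB y.val x.val h (by omega) hA.symm with h1 | h1
          · right; omega
          · exfalso; omega
      · rintro (h1 | h1)
        · have hA := hadj x.val (by omega)
          rwa [h1] at hA
        · have hA := hadj y.val (by omega)
          rw [h1] at hA
          exact hA.symm

theorem stmt17 {V : Type*} [Fintype V] (G : SimpleGraph V)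
    (hconn : G.Connected)
    (htri : G.CliqueFree 3)
    (hP5 : ¬ HasInducedCopy (SimpleGraph.pathGraph 5) G) :
    (G.Colorable 2 ∨ HasInducedCopy cycle5 G) ∧
      (¬ HasInducedCopy cycle5 G → G.Colorable 2) := by
  classical
  by_cases h : ∃ (a : V) (n : ℕ), Odd n ∧ FW G a a n
  · have hc5 := inducedC5_of_odd htri hP5 h
    exact ⟨Or.inr hc5, fun hn => absurd hc5 hn⟩
  · have hc := colorable_of_no_odd hconn h
    exact ⟨Or.inl hc, fun _ => hc⟩
end

section
/- Let G be a 5-vertex-critical graph and let K ⊆ V(G) be a homogeneous set (no vertex outside K has both a neighbor and a non-neighbor in K) with χ(G[K]) = 2. Then |K| = 2, i.e., if K has a bipartition X ∪ Y with an edge xy (x∈X, y∈Y), then K = {x,y}. -/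
open SimpleGraph

theorem stmt18 {V : Type*} [Fintype V] (G : SimpleGraph V)
    (hcrit : IsVertexCritical G 5)
    (K : Set V)
    (hhom : ∀ w ∉ K, (∀ x ∈ K, G.Adj w x) ∨ (∀ x ∈ K, ¬ G.Adj w x))
    (hchi : (G.induce K).chromaticNumber = 2) :
    K.ncard = 2 := by
  classical
  obtain ⟨hchiG, hdel⟩ := hcrit
  -- a 2-coloring of the induced subgraph on K
  have hcol2 : (G.induce K).Colorable 2 := by
    rw [← chromaticNumber_le_iff_colorable, hchi]
    exact_mod_cast le_rfl
  obtain ⟨c₂⟩ := hcol2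
  -- there is an edge inside K
  have hedge : ∃ a b : K, (G.induce K).Adj a b := by
    by_contra h
    push_neg at h
    have : (G.induce K).Colorable 1 :=
      ⟨⟨fun _ => 0, fun {a b} hab => absurd hab (h a b)⟩⟩
    have := this.chromaticNumber_le
    rw [hchi] at this
    norm_num at this
  obtain ⟨a, b, hab⟩ := hedge
  have hGab : G.Adj (a : V) (b : V) := hab
  have hxy : (a : V) ≠ (b : V) := hGab.ne
  have hxK : (a : V) ∈ K := a.2
  have hyK : (b : V) ∈ K := b.2
  have hc2ab : c₂ a ≠ c₂ b := c₂.valid hab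
  -- key claim: every z ∈ K equals a or b
  have hkey : ∀ z ∈ K, z = (a : V) ∨ z = (b : V) := by
    intro z hzK
    by_contra hz
    push_neg at hz
    obtain ⟨hza, hzb⟩ := hz
    -- 4-coloring of G − z
    have h4 : (G.induce {z}ᶜ).Colorable 4 := by
      rw [← chromaticNumber_le_iff_colorable]
      have h5 := hdel z
      have h54 : ((5:ℕ) : ℕ∞) = (4 : ℕ∞) + 1 := by norm_num
      rw [h54] at h5
      have := (ENat.lt_add_one_iff (by simp)).mp h5
      exact_mod_cast this
    obtain ⟨c⟩ := h4
    -- construct a 4-coloring of G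
    have haz : (a : V) ∈ ({z}ᶜ : Set V) := by simp [Ne.symm hza]
    have hbz : (b : V) ∈ ({z}ᶜ : Set V) := by simp [Ne.symm hzb]
    set ca := c ⟨(a : V), haz⟩ with hca
    set cb := c ⟨(b : V), hbz⟩ with hcb
    have hcab : ca ≠ cb := c.valid (by exact hGab)
    let f : V → Fin 4 := fun v =>
      if hv : v ∈ K then (if c₂ ⟨v, hv⟩ = c₂ a then ca else cb)
      else c ⟨v, fun h => hv (by rwa [Set.mem_singleton_iff.mp h])⟩
    have hvalid : ∀ {v w : V}, G.Adj v w → f v ≠ f w := by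
      intro v w hvw
      by_cases hv : v ∈ K <;> by_cases hw : w ∈ K
      · -- both in K
        have hadj : (G.induce K).Adj ⟨v, hv⟩ ⟨w, hw⟩ := hvw
        have hne := c₂.valid hadj
        simp only [f, dif_pos hv, dif_pos hw]
        have h2 : ∀ p q r : Fin 2, p ≠ q → ¬(p ≠ r ∧ q ≠ r) := by decide
        by_cases h1 : c₂ ⟨v, hv⟩ = c₂ a <;> by_cases h2' : c₂ ⟨w, hw⟩ = c₂ a
        · exact absurd (h1.trans h2'.symm) hne
        · simpa [h1, h2'] using hcab
        · simpa [h1, h2'] using hcab.symm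
        · exact absurd ⟨h1, h2'⟩ (h2 _ _ _ hne)
      · -- v ∈ K, w ∉ K : w is complete to K
        have hcomp : ∀ x ∈ K, G.Adj w x := by
          rcases hhom w hw with h | h
          · exact h
          · exact absurd hvw.symm (h v hv)
        have hwz : w ∈ ({z}ᶜ : Set V) := fun h => hw (by rwa [Set.mem_singleton_iff.mp h])
        have h1 : G.Adj w (a : V) := hcomp _ hxK
        have h2 : G.Adj w (b : V) := hcomp _ hyK
        have hca' : c ⟨w, hwz⟩ ≠ ca := c.valid (by exact h1)
        have hcb' : c ⟨w, hwz⟩ ≠ cb := c.valid (by exact h2)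
        simp only [f, dif_pos hv, dif_neg hw]
        by_cases h1' : c₂ ⟨v, hv⟩ = c₂ a <;> simp [h1', hca'.symm, hcb'.symm]
      · -- v ∉ K, w ∈ K
        have hcomp : ∀ x ∈ K, G.Adj v x := by
          rcases hhom v hv with h | h
          · exact h
          · exact absurd hvw (h w hw)
        have hvz : v ∈ ({z}ᶜ : Set V) := fun h => hv (by rwa [Set.mem_singleton_iff.mp h])
        have h1 : G.Adj v (a : V) := hcomp _ hxK
        have h2 : G.Adj v (b : V) := hcomp _ hyK
        have hca' : c ⟨v, hvz⟩ ≠ ca := c.valid (by exact h1)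
        have hcb' : c ⟨v, hvz⟩ ≠ cb := c.valid (by exact h2)
        simp only [f, dif_pos hw, dif_neg hv]
        by_cases h1' : c₂ ⟨w, hw⟩ = c₂ a <;> simp [h1', hca', hcb']
      · -- both outside K
        simp only [f, dif_neg hv, dif_neg hw]
        exact c.valid (by exact hvw)
    have : G.Colorable 4 := ⟨⟨f, hvalid⟩⟩
    have := this.chromaticNumber_le
    rw [hchiG] at this
    norm_num at this
  -- K = {a, b}
  have hKeq : K = {(a : V), (b : V)} := by
    apply Set.eq_of_subset_of_subset
    · intro z hz
      rcases hkey z hz with h | h <;> simp [h]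
    · intro z hz
      simp only [Set.mem_insert_iff, Set.mem_singleton_iff] at hz
      rcases hz with h | h <;> subst h <;> assumption
  rw [hKeq]
  exact Set.ncard_pair hxy
end
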